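/- arXiv:2305.14056 — 6 statements merged into one kernel-verified Lean document; each statement's English description precedes it below -/
import Mathlib

section
/- The prism graph Π_3 is equitably 3-choosable: every 3-uniform list assignment L of Π_3 admits a proper L-coloring in which every color class contains at most 2 vertices. -/
/-- The prism graph `Π_n = C_n □ K_2`, on vertex set `Fin n × Fin 2`:
`(i,j)` is adjacent to `(i',j')` iff `i = i'` and `j ≠ j'`, or `j = j'` and
`i' − i ≡ ±1 (mod n)`. -/
def prism (n : ℕ) : SimpleGraph (Fin n × Fin 2) :=
  SimpleGraph.fromRel (fun v w =>
    (v.1 = w.1 ∧ v.2 ≠ w.2) ∨ (v.2 = w.2 ∧ w.1.val = (v.1.val + 1) % n))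

/-- `c` is a proper `L`-coloring of the prism graph `Π_n`. -/
def IsProperListColoring {n : ℕ} (L : Fin n × Fin 2 → Finset ℕ)
    (c : Fin n × Fin 2 → ℕ) : Prop :=
  (∀ v, c v ∈ L v) ∧ ∀ v w, (prism n).Adj v w → c v ≠ c w

/-- The color class of color `k` under the coloring `c`. -/
def colorClass {n : ℕ} (c : Fin n × Fin 2 → ℕ) (k : ℕ) : Finset (Fin n × Fin 2) :=
  Finset.univ.filter (fun v => c v = k)

instance prismAdjDec : DecidableRel (prism 3).Adj := fun a b =>
  decidable_of_iff' _ (SimpleGraph.fromRel_adj _ a b)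

/-- Greedy coloring of the 4-cycle when some color of `K1` avoids `K2`. -/
lemma cycle4_aux {K1 K2 K3 K4 : Finset ℕ}
    (h2 : 2 ≤ K2.card) (h3 : 2 ≤ K3.card) (h4 : 2 ≤ K4.card)
    {a : ℕ} (ha : a ∈ K1) (ha2 : a ∉ K2) :
    ∃ c1 c2 c3 c4, c1 ∈ K1 ∧ c2 ∈ K2 ∧ c3 ∈ K3 ∧ c4 ∈ K4 ∧
      c1 ≠ c2 ∧ c2 ≠ c3 ∧ c3 ≠ c4 ∧ c1 ≠ c4 := by
  obtain ⟨c4, hc4, hc4a⟩ := Finset.exists_mem_ne (by omega : 1 < K4.card) a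
  obtain ⟨c3, hc3, hc3c4⟩ := Finset.exists_mem_ne (by omega : 1 < K3.card) c4
  obtain ⟨c2, hc2, hc2c3⟩ := Finset.exists_mem_ne (by omega : 1 < K2.card) c3
  exact ⟨a, c2, c3, c4, ha, hc2, hc3, hc4,
    fun h => ha2 (h ▸ hc2), hc2c3, hc3c4, hc4a.symm⟩

/-- Even cycle `C₄` is 2-choosable. -/
lemma cycle4 {K1 K2 K3 K4 : Finset ℕ}
    (h1 : 2 ≤ K1.card) (h2 : 2 ≤ K2.card) (h3 : 2 ≤ K3.card) (h4 : 2 ≤ K4.card) :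
    ∃ c1 c2 c3 c4, c1 ∈ K1 ∧ c2 ∈ K2 ∧ c3 ∈ K3 ∧ c4 ∈ K4 ∧
      c1 ≠ c2 ∧ c2 ≠ c3 ∧ c3 ≠ c4 ∧ c1 ≠ c4 := by
  by_cases e12 : ∃ a ∈ K1, a ∉ K2
  · obtain ⟨a, ha, ha'⟩ := e12
    exact cycle4_aux h2 h3 h4 ha ha'
  by_cases e23 : ∃ a ∈ K2, a ∉ K3
  · obtain ⟨a, ha, ha'⟩ := e23
    obtain ⟨c2, c3, c4, c1, m2, m3, m4, m1, n23, n34, n41, n12⟩ :=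
      cycle4_aux h3 h4 h1 ha ha'
    exact ⟨c1, c2, c3, c4, m1, m2, m3, m4, n12.symm, n23, n34, n41.symm⟩
  by_cases e34 : ∃ a ∈ K3, a ∉ K4
  · obtain ⟨a, ha, ha'⟩ := e34
    obtain ⟨c3, c4, c1, c2, m3, m4, m1, m2, n34, n41, n12, n23⟩ :=
      cycle4_aux h4 h1 h2 ha ha'
    exact ⟨c1, c2, c3, c4, m1, m2, m3, m4, n12, n23.symm, n34, n41.symm⟩
  by_cases e41 : ∃ a ∈ K4, a ∉ K1
  · obtain ⟨a, ha, ha'⟩ := e41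
    obtain ⟨c4, c1, c2, c3, m4, m1, m2, m3, n41, n12, n23, n34⟩ :=
      cycle4_aux h1 h2 h3 ha ha'
    exact ⟨c1, c2, c3, c4, m1, m2, m3, m4, n12, n23, n34.symm, n41.symm⟩
  push_neg at e12 e23 e34 e41
  have s12 : K1 ⊆ K2 := e12
  have s23 : K2 ⊆ K3 := e23
  have s34 : K3 ⊆ K4 := e34
  have s41 : K4 ⊆ K1 := e41
  obtain ⟨a, ha⟩ := Finset.card_pos.mp (by omega : 0 < K1.card)
  obtain ⟨b, hb, hba⟩ := Finset.exists_mem_ne (by omega : 1 < K1.card) a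
  exact ⟨a, b, a, b, ha, s12 hb, s23 (s12 ha), s34 (s23 (s12 hb)),
    hba.symm, hba, hba.symm, hba.symm⟩

lemma prism3_indep :
    ∀ a b d : Fin 3 × Fin 2, a ≠ b → a ≠ d → b ≠ d →
      (prism 3).Adj a b ∨ (prism 3).Adj a d ∨ (prism 3).Adj b d := by
  decide

/-- The prism graph `Π_3` is equitably 3-choosable: every 3-uniform list assignment `L`
admits a proper `L`-coloring in which every color class contains at most 2 vertices. -/
theorem prism_three_equitably_three_choosable
    (L : Fin 3 × Fin 2 → Finset ℕ) (hL : ∀ v, (L v).card = 3) :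
    ∃ c : Fin 3 × Fin 2 → ℕ, IsProperListColoring L c ∧
      ∀ k : ℕ, (colorClass c k).card ≤ 2 := by
  -- choose colors for (2,0) and (2,1)
  obtain ⟨x, hx⟩ := Finset.card_pos.mp (by rw [hL]; norm_num : 0 < (L (2,0)).card)
  obtain ⟨y, hy, hyx⟩ := Finset.exists_mem_ne
    (by rw [hL]; norm_num : 1 < (L (2,1)).card) x
  -- lists on the remaining 4-cycle
  have hcard : ∀ v z, 2 ≤ ((L v).erase z).card := fun v z => by
    have := Finset.pred_card_le_card_erase (s := L v) (a := z)
    rw [hL] at this; omega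
  obtain ⟨c1, c2, c3, c4, m1, m2, m3, m4, n12, n23, n34, n41⟩ :=
    cycle4 (hcard (0,0) x) (hcard (1,0) x) (hcard (1,1) y) (hcard (0,1) y)
  have m1' := Finset.mem_erase.mp m1
  have m2' := Finset.mem_erase.mp m2
  have m3' := Finset.mem_erase.mp m3
  have m4' := Finset.mem_erase.mp m4
  set c : Fin 3 × Fin 2 → ℕ := fun p =>
    if p.2 = 0 then (if p.1 = 0 then c1 else if p.1 = 1 then c2 else x)
    else (if p.1 = 0 then c4 else if p.1 = 1 then c3 else y) with hc
  have hproper : IsProperListColoring L c := by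
    constructor
    · intro v
      fin_cases v <;> simp [hc] <;>
        first
        | exact m1'.2 | exact m2'.2 | exact m3'.2 | exact m4'.2
        | exact hx | exact hy
    · intro v w h
      fin_cases v <;> fin_cases w <;>
        first
        | exact absurd h (by decide)
        | (simp [hc]; first
            | exact n12 | exact n12.symm | exact n23 | exact n23.symm
            | exact n34 | exact n34.symm | exact n41 | exact n41.symm
            | exact m1'.1 | exact (Ne.symm m1'.1) | exact m2'.1 | exact (Ne.symm m2'.1)
            | exact m3'.1 | exact (Ne.symm m3'.1) | exact m4'.1 | exact (Ne.symm m4'.1)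
            | exact hyx.symm | exact hyx)
  refine ⟨c, hproper, fun k => ?_⟩
  by_contra hcon
  push_neg at hcon
  obtain ⟨t, ht, htc⟩ := Finset.exists_subset_card_eq (by omega : 3 ≤ (colorClass c k).card)
  obtain ⟨a, b, d, hab, had, hbd, rfl⟩ := Finset.card_eq_three.mp htc
  have ha := ht (by simp : a ∈ ({a, b, d} : Finset _))
  have hb := ht (by simp : b ∈ ({a, b, d} : Finset _))
  have hd := ht (by simp : d ∈ ({a, b, d} : Finset _))
  simp [colorClass] at ha hb hd
  rcases prism3_indep a b d hab had hbd with h | h | h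
  · exact hproper.2 a b h (ha.trans hb.symm)
  · exact hproper.2 a d h (ha.trans hd.symm)
  · exact hproper.2 b d h (hb.trans hd.symm)
end

section
/- The prism graph Π_5 is equitably 3-choosable: every 3-uniform list assignment L of Π_5 admits a proper L-coloring in which every color class contains at most 4 vertices. -/
lemma fin2_cycle5 (v0 v1 v2 v3 v4 : Fin 2)
    (h0 : v0 ≠ v1) (h1 : v1 ≠ v2) (h2 : v2 ≠ v3) (h3 : v3 ≠ v4) (h4 : v4 ≠ v0) : False := by
  fin_cases v0 <;> fin_cases v1 <;> fin_cases v2 <;> fin_cases v3 <;> fin_cases v4 <;> simp_all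

lemma prism_adj_rung (i : Fin 5) (a b : Fin 2) (h : a ≠ b) :
    (prism 5).Adj (i, a) (i, b) := by
  refine ⟨by simp [Prod.ext_iff, h], Or.inl (Or.inl ⟨rfl, h⟩)⟩

lemma step_ne (i : Fin 5) : i ≠ i + 1 := by
  intro h
  have := congrArg Fin.val h
  rw [Fin.val_add_one] at this
  split at this <;> omega

lemma prism_adj_step (i : Fin 5) (a : Fin 2) :
    (prism 5).Adj (i, a) (i + 1, a) := by
  refine ⟨?_, Or.inl (Or.inr ⟨rfl, ?_⟩)⟩
  · simp only [ne_eq, Prod.mk.injEq, not_and]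
    intro h; exact absurd h (step_ne i)
  · show (i + 1).val = (i.val + 1) % 5
    simp [Fin.add_def]

lemma indep_le_four (S : Finset (Fin 5 × Fin 2))
    (h : ∀ v ∈ S, ∀ w ∈ S, ¬ (prism 5).Adj v w) : S.card ≤ 4 := by
  by_contra hc
  push_neg at hc
  -- each fiber over Fin 5 has card ≤ 1
  have hfib : ∀ i : Fin 5, (S.filter (fun v => v.1 = i)).card ≤ 1 := by
    intro i
    by_contra hf
    push_neg at hf
    obtain ⟨v, hv, w, hw, hvw⟩ := Finset.one_lt_card.mp hf
    simp only [Finset.mem_filter] at hv hw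
    have hne : v.2 ≠ w.2 := by
      intro h2
      exact hvw (Prod.ext (hv.2.trans hw.2.symm) h2)
    exact h v hv.1 w hw.1 ⟨hvw, Or.inl (Or.inl ⟨hv.2.trans hw.2.symm, hne⟩)⟩
  have hsum : S.card = ∑ i : Fin 5, (S.filter (fun v => v.1 = i)).card :=
    Finset.card_eq_sum_card_fiberwise (fun x _ => Finset.mem_univ x.1)
  -- every fiber is nonempty
  have hne : ∀ i : Fin 5, (S.filter (fun v => v.1 = i)).Nonempty := by
    intro i
    rw [Finset.nonempty_iff_ne_empty]
    intro hemp
    have : S.card ≤ ∑ j ∈ (Finset.univ : Finset (Fin 5)).erase i, 1 := by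
      rw [hsum, ← Finset.add_sum_erase _ _ (Finset.mem_univ i), hemp]
      simp only [Finset.card_empty, zero_add]
      exact Finset.sum_le_sum (fun j _ => hfib j)
    simp at this
    omega
  choose f hf using fun i => (hne i).exists_mem
  -- f i ∈ S, f i .1 = i
  have hfst : ∀ i, (f i).1 = i := fun i => (Finset.mem_filter.mp (hf i)).2
  have hmem : ∀ i, f i ∈ S := fun i => (Finset.mem_filter.mp (hf i)).1
  have hstep : ∀ i : Fin 5, (f i).2 ≠ (f (i + 1)).2 := by
    intro i heq
    have : (prism 5).Adj (i, (f i).2) (i + 1, (f (i+1)).2) := heq ▸ prism_adj_step i (f i).2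
    have e1 : ((i : Fin 5), (f i).2) = f i := Prod.ext_iff.mpr ⟨(hfst i).symm, rfl⟩
    have e2 : ((i + 1 : Fin 5), (f (i+1)).2) = f (i+1) := Prod.ext_iff.mpr ⟨(hfst (i+1)).symm, rfl⟩
    rw [e1, e2] at this
    exact h _ (hmem i) _ (hmem (i+1)) this
  exact fin2_cycle5 (f 0).2 (f 1).2 (f 2).2 (f 3).2 (f 4).2
    (hstep 0) (hstep 1) (hstep 2) (hstep 3) (by simpa using hstep 4)

lemma pick (L : Finset ℕ) (h : L.card = 3) (a b : ℕ) : ∃ x ∈ L, x ≠ a ∧ x ≠ b := by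
  have h2 : ({a, b} : Finset ℕ).card ≤ 2 := Finset.card_insert_le _ _ |>.trans (by simp)
  have : 1 ≤ (L \ {a, b}).card := by
    have := Finset.le_card_sdiff ({a, b} : Finset ℕ) L
    omega
  obtain ⟨x, hx⟩ := Finset.card_pos.mp this
  simp only [Finset.mem_sdiff, Finset.mem_insert, Finset.mem_singleton] at hx
  exact ⟨x, hx.1, by tauto, by tauto⟩

lemma build (L : Fin 5 × Fin 2 → Finset ℕ) (c : Fin 5 × Fin 2 → ℕ)
    (hmem : ∀ v, c v ∈ L v)
    (hrung : ∀ i : Fin 5, c (i, 0) ≠ c (i, 1))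
    (hbot : ∀ i : Fin 5, c (i, 0) ≠ c (i + 1, 0))
    (htop : ∀ i : Fin 5, c (i, 1) ≠ c (i + 1, 1)) :
    IsProperListColoring L c ∧ ∀ k : ℕ, (colorClass c k).card ≤ 4 := by
  have two : ∀ x : Fin 2, x = 0 ∨ x = 1 := by decide
  have key : ∀ v w : Fin 5 × Fin 2,
      ((v.1 = w.1 ∧ v.2 ≠ w.2) ∨ (v.2 = w.2 ∧ w.1.val = (v.1.val + 1) % 5)) →
      c v ≠ c w := by
    rintro v w (⟨h1, h2⟩ | ⟨h1, h2⟩)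
    · rcases two v.2 with hv | hv <;> rcases two w.2 with hw | hw
      · exact absurd (hv.trans hw.symm) h2
      · rw [show v = (v.1, 0) from Prod.ext_iff.mpr ⟨rfl, hv⟩,
           show w = (v.1, 1) from Prod.ext_iff.mpr ⟨h1.symm, hw⟩]
        exact hrung v.1
      · rw [show v = (v.1, 1) from Prod.ext_iff.mpr ⟨rfl, hv⟩,
           show w = (v.1, 0) from Prod.ext_iff.mpr ⟨h1.symm, hw⟩]
        exact (hrung v.1).symm
      · exact absurd (hv.trans hw.symm) h2
    · have hw1 : w.1 = v.1 + 1 := Fin.ext (by simpa [Fin.add_def] using h2)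
      rcases two v.2 with hv | hv
      · rw [show v = (v.1, 0) from Prod.ext_iff.mpr ⟨rfl, hv⟩,
           show w = (v.1 + 1, 0) from Prod.ext_iff.mpr ⟨hw1, h1.symm.trans hv⟩]
        exact hbot v.1
      · rw [show v = (v.1, 1) from Prod.ext_iff.mpr ⟨rfl, hv⟩,
           show w = (v.1 + 1, 1) from Prod.ext_iff.mpr ⟨hw1, h1.symm.trans hv⟩]
        exact htop v.1
  have hproper : IsProperListColoring L c := by
    refine ⟨hmem, fun v w hadj => ?_⟩
    obtain ⟨hne, hrel⟩ := hadj
    rcases hrel with h | h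
    · exact key v w h
    · exact (key w v h).symm
  refine ⟨hproper, fun k => ?_⟩
  apply indep_le_four
  intro v hv w hw hadj
  simp only [colorClass, Finset.mem_filter] at hv hw
  exact hproper.2 v w hadj (hv.2.trans hw.2.symm)

lemma build' (L : Fin 5 × Fin 2 → Finset ℕ)
    (a0 a1 a2 a3 a4 b0 b1 b2 b3 b4 : ℕ)
    (m0 : a0 ∈ L (0, 0)) (m1 : a1 ∈ L (1, 0)) (m2 : a2 ∈ L (2, 0))
    (m3 : a3 ∈ L (3, 0)) (m4 : a4 ∈ L (4, 0))
    (n0 : b0 ∈ L (0, 1)) (n1 : b1 ∈ L (1, 1)) (n2 : b2 ∈ L (2, 1))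
    (n3 : b3 ∈ L (3, 1)) (n4 : b4 ∈ L (4, 1))
    (e0 : a0 ≠ a1) (e1 : a1 ≠ a2) (e2 : a2 ≠ a3) (e3 : a3 ≠ a4) (e4 : a4 ≠ a0)
    (f0 : b0 ≠ b1) (f1 : b1 ≠ b2) (f2 : b2 ≠ b3) (f3 : b3 ≠ b4) (f4 : b4 ≠ b0)
    (r0 : a0 ≠ b0) (r1 : a1 ≠ b1) (r2 : a2 ≠ b2) (r3 : a3 ≠ b3) (r4 : a4 ≠ b4) :
    ∃ c : Fin 5 × Fin 2 → ℕ, IsProperListColoring L c ∧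
      ∀ k : ℕ, (colorClass c k).card ≤ 4 := by
  refine ⟨fun v =>
    if v.2.val = 0 then
      (if v.1.val = 0 then a0 else if v.1.val = 1 then a1 else if v.1.val = 2 then a2
        else if v.1.val = 3 then a3 else a4)
    else
      (if v.1.val = 0 then b0 else if v.1.val = 1 then b1 else if v.1.val = 2 then b2
        else if v.1.val = 3 then b3 else b4), ?_⟩
  apply build
  · intro v; fin_cases v <;> simp <;> assumption
  · intro i; fin_cases i
    · exact r0
    · exact r1
    · exact r2
    · exact r3
    · exact r4
  · intro i; fin_cases i
    · exact e0
    · exact e1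
    · exact e2
    · exact e3
    · exact e4
  · intro i; fin_cases i
    · exact f0
    · exact f1
    · exact f2
    · exact f3
    · exact f4

/-- The prism graph `Π_5` is equitably 3-choosable: every 3-uniform list assignment `L`
admits a proper `L`-coloring in which every color class contains at most 4 vertices. -/
theorem prism_five_equitably_three_choosable
    (L : Fin 5 × Fin 2 → Finset ℕ) (hL : ∀ v, (L v).card = 3) :
    ∃ c : Fin 5 × Fin 2 → ℕ, IsProperListColoring L c ∧
      ∀ k : ℕ, (colorClass c k).card ≤ 4 := by
  by_cases hA : (L (1, 0) ∩ L (4, 0)).Nonempty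
  · -- Case A: common color t on (1,0) and (4,0)
    obtain ⟨t, ht⟩ := hA
    rw [Finset.mem_inter] at ht
    obtain ⟨ht1, ht4⟩ := ht
    obtain ⟨x2, hx2, hx2a, -⟩ := pick (L (2, 0)) (hL _) t t
    obtain ⟨x3, hx3, hx3a, hx3b⟩ := pick (L (3, 0)) (hL _) x2 t
    obtain ⟨y2, hy2, hy2a, -⟩ := pick (L (2, 1)) (hL _) x2 x2
    obtain ⟨y3, hy3, hy3a, hy3b⟩ := pick (L (3, 1)) (hL _) x3 y2
    obtain ⟨y1, hy1, hy1a, hy1b⟩ := pick (L (1, 1)) (hL _) t y2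
    obtain ⟨y4, hy4, hy4a, hy4b⟩ := pick (L (4, 1)) (hL _) t y3
    obtain ⟨y0, hy0, hy0a, hy0b⟩ := pick (L (0, 1)) (hL _) y1 y4
    obtain ⟨x0, hx0, hx0a, hx0b⟩ := pick (L (0, 0)) (hL _) t y0
    exact build' L x0 t x2 x3 t y0 y1 y2 y3 y4
      hx0 ht1 hx2 hx3 ht4 hy0 hy1 hy2 hy3 hy4
      hx0a hx2a.symm hx3a.symm hx3b hx0a.symm
      hy0a hy1b hy3b.symm hy4b.symm hy0b.symm
      hx0b hy1a.symm hy2a.symm hy3a.symm hy4a.symm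
  · by_cases hB : (L (1, 0) \ L (0, 0)).Nonempty
    · -- Case B: a ∈ L(1,0) \ L(0,0)
      obtain ⟨a, ha⟩ := hB
      rw [Finset.mem_sdiff] at ha
      obtain ⟨ha1, ha0⟩ := ha
      obtain ⟨x2, hx2, hx2a, -⟩ := pick (L (2, 0)) (hL _) a a
      obtain ⟨x3, hx3, hx3a, -⟩ := pick (L (3, 0)) (hL _) x2 x2
      obtain ⟨x4, hx4, hx4a, -⟩ := pick (L (4, 0)) (hL _) x3 x3
      obtain ⟨y1, hy1, hy1a, -⟩ := pick (L (1, 1)) (hL _) a a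
      obtain ⟨y2, hy2, hy2a, hy2b⟩ := pick (L (2, 1)) (hL _) x2 y1
      obtain ⟨y3, hy3, hy3a, hy3b⟩ := pick (L (3, 1)) (hL _) x3 y2
      obtain ⟨y4, hy4, hy4a, hy4b⟩ := pick (L (4, 1)) (hL _) x4 y3
      obtain ⟨y0, hy0, hy0a, hy0b⟩ := pick (L (0, 1)) (hL _) y1 y4
      obtain ⟨x0, hx0, hx0a, hx0b⟩ := pick (L (0, 0)) (hL _) x4 y0
      exact build' L x0 a x2 x3 x4 y0 y1 y2 y3 y4
        hx0 ha1 hx2 hx3 hx4 hy0 hy1 hy2 hy3 hy4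
        (fun h => ha0 (h ▸ hx0)) hx2a.symm hx3a.symm hx4a.symm hx0a.symm
        hy0a hy2b.symm hy3b.symm hy4b.symm hy0b.symm
        hx0b hy1a.symm hy2a.symm hy3a.symm hy4a.symm
    · -- Case C: L(1,0) = L(0,0), so L(4,0) is disjoint from L(0,0)
      have hsub : L (1, 0) ⊆ L (0, 0) := by
        rw [Finset.not_nonempty_iff_eq_empty, Finset.sdiff_eq_empty_iff_subset] at hB
        exact hB
      have heq : L (1, 0) = L (0, 0) :=
        Finset.eq_of_subset_of_card_le hsub (by rw [hL, hL])
      obtain ⟨a, ha4⟩ : (L (4, 0)).Nonempty :=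
        Finset.card_pos.mp (by rw [hL]; norm_num)
      have ha0 : a ∉ L (0, 0) := by
        intro h
        exact hA ⟨a, Finset.mem_inter.mpr ⟨heq ▸ h, ha4⟩⟩
      obtain ⟨x3, hx3, hx3a, -⟩ := pick (L (3, 0)) (hL _) a a
      obtain ⟨x2, hx2, hx2a, -⟩ := pick (L (2, 0)) (hL _) x3 x3
      obtain ⟨x1, hx1, hx1a, -⟩ := pick (L (1, 0)) (hL _) x2 x2
      obtain ⟨y4, hy4, hy4a, -⟩ := pick (L (4, 1)) (hL _) a a
      obtain ⟨y3, hy3, hy3a, hy3b⟩ := pick (L (3, 1)) (hL _) x3 y4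
      obtain ⟨y2, hy2, hy2a, hy2b⟩ := pick (L (2, 1)) (hL _) x2 y3
      obtain ⟨y1, hy1, hy1a, hy1b⟩ := pick (L (1, 1)) (hL _) x1 y2
      obtain ⟨y0, hy0, hy0a, hy0b⟩ := pick (L (0, 1)) (hL _) y1 y4
      obtain ⟨x0, hx0, hx0a, hx0b⟩ := pick (L (0, 0)) (hL _) x1 y0
      exact build' L x0 x1 x2 x3 a y0 y1 y2 y3 y4
        hx0 hx1 hx2 hx3 ha4 hy0 hy1 hy2 hy3 hy4
        hx0a hx1a hx2a hx3a (fun h => ha0 (h.symm ▸ hx0))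
        hy0a hy1b hy2b hy3b hy0b.symm
        hx0b hy1a.symm hy2a.symm hy3a.symm hy4a.symm
end

section
/- The prism graph Π_4 is equitably 3-choosable: every 3-uniform list assignment L of Π_4 admits a proper L-coloring in which every color class contains at most 3 vertices. -/
/-!
`Π_4` is the cube `K_2 × K_4`: index both sides of its bipartition by `Fin 4` so that the `i`-th
vertices of the two sides are antipodal; then two vertices are adjacent iff they lie on different
sides and have different indices. A proper list coloring is therefore a pair of choice functions
`x, y` with `x i ≠ y j` for `i ≠ j`, and since a color can then occur on both sides only at one
antipodal pair, the coloring is equitable as soon as neither `x` nor `y` is constant.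

If some color lies in all four lists of one side, use it on three vertices of that side and a
second color on the fourth; the other side then has two distinct admissible choices at some
vertex. Otherwise non-constancy is automatic and a cross choice is found greedily: either two
lists of a side meet and the two vertices share a color, or the lists of a side are pairwise
disjoint and each `x (j + 1)` is taken outside the list of `y j` when possible.
-/

open Finset Function

section CrossChoice

variable {ι α : Type*}

def IsCrossChoice (A B : ι → Finset α) (x y : ι → α) : Prop :=
  (∀ i, x i ∈ A i) ∧ (∀ j, y j ∈ B j) ∧ ∀ i j, i ≠ j → x i ≠ y j

namespace IsCrossChoice

variable {A B : ι → Finset α} {x y : ι → α}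

lemma symm (h : IsCrossChoice A B x y) : IsCrossChoice B A y x :=
  ⟨h.2.1, h.1, fun i j hij => (h.2.2 j i hij.symm).symm⟩

lemma of_comp (σ : Equiv.Perm ι) (h : IsCrossChoice (A ∘ σ) (B ∘ σ) x y) :
    IsCrossChoice A B (x ∘ σ.symm) (y ∘ σ.symm) := by
  refine ⟨fun i => by simpa using h.1 (σ.symm i), fun j => by simpa using h.2.1 (σ.symm j),
    fun i j hij => h.2.2 _ _ (σ.symm.injective.ne hij)⟩

end IsCrossChoice

lemma exists_apply_ne_of_forall_mem {A : ι → Finset α} {x : ι → α} (hx : ∀ i, x i ∈ A i)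
    (hA : ¬∃ z, ∀ i, z ∈ A i) (k : α) : ∃ i, x i ≠ k := by
  by_contra! hk
  exact hA ⟨k, fun i => hk i ▸ hx i⟩

lemma exists_apply_ne_of_apply_ne {x : ι → α} {i j : ι} (h : x i ≠ x j) (k : α) :
    ∃ l, x l ≠ k := by
  by_cases hi : x i = k
  · exact ⟨j, hi ▸ h.symm⟩
  · exact ⟨i, hi⟩

lemma Finset.exists_mem_ne_and_ne [DecidableEq α] {s : Finset α} (hs : 2 < #s) (a b : α) :
    ∃ c ∈ s, c ≠ a ∧ c ≠ b := by
  obtain ⟨c, hc⟩ := sdiff_nonempty_of_card_lt_card (card_le_two.trans_lt hs : #{a, b} < #s)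
  simp only [mem_sdiff, mem_insert, mem_singleton, not_or] at hc
  exact ⟨c, hc.1, hc.2⟩

lemma Finset.exists_mem_forall_ne_of_notMem [Fintype ι] [DecidableEq ι] [DecidableEq α]
    {s : Finset α} (hs : Fintype.card ι < #s + 2) (x : ι → α) {j i₀ : ι} (hi₀ : i₀ ≠ j)
    (hx : x i₀ ∉ s) : ∃ b ∈ s, ∀ i, i ≠ j → x i ≠ b := by
  set t := (univ.erase j).erase i₀
  have ht : #(t.image x) < #s := by
    have h₁ : #t + 1 = #(univ.erase j) := card_erase_add_one (mem_erase.mpr ⟨hi₀, mem_univ i₀⟩)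
    have h₂ := card_erase_add_one (mem_univ j)
    rw [card_univ] at h₂
    exact card_image_le.trans_lt (by omega)
  obtain ⟨b, hb⟩ := sdiff_nonempty_of_card_lt_card ht
  rw [mem_sdiff] at hb
  refine ⟨b, hb.1, fun i hij hib => ?_⟩
  by_cases hi : i = i₀
  · exact hx (hi ▸ hib ▸ hb.1)
  · exact hb.2 (hib ▸ mem_image_of_mem x (by simp [t, hi, hij]))

end CrossChoice

section FourLists

variable {α : Type*} [DecidableEq α] {A B : Fin 4 → Finset α}

lemma exists_isCrossChoice_nonconstant_of_forall_mem (hA : ∀ i, 2 < #(A i))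
    (hB : ∀ j, 2 < #(B j)) {z : α} (hz : ∀ i, z ∈ A i) :
    ∃ x y, IsCrossChoice A B x y ∧ (∀ k, ∃ i, x i ≠ k) ∧ ∀ k, ∃ j, y j ≠ k := by
  obtain ⟨a, ha, haz, -⟩ := exists_mem_ne_and_ne (hA 3) z z
  obtain ⟨y₀, hy₀, hy₀z, hy₀a⟩ := exists_mem_ne_and_ne (hB 0) z a
  obtain ⟨y₁, hy₁, hy₁z, hy₁a⟩ := exists_mem_ne_and_ne (hB 1) z a
  obtain ⟨y₂, hy₂, hy₂z, hy₂a⟩ := exists_mem_ne_and_ne (hB 2) z a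
  obtain ⟨y₃, hy₃, hy₃z, hy₃y₀⟩ := exists_mem_ne_and_ne (hB 3) z y₀
  refine ⟨![z, z, z, a], ![y₀, y₁, y₂, y₃], ⟨?_, ?_, ?_⟩,
    exists_apply_ne_of_apply_ne (i := 3) (j := 0) haz,
    exists_apply_ne_of_apply_ne (i := 3) (j := 0) hy₃y₀⟩
  · intro i; fin_cases i <;> simp [hz, ha]
  · intro j; fin_cases j <;> simp [hy₀, hy₁, hy₂, hy₃]
  · intro i j hij
    fin_cases i <;> fin_cases j <;> simp_all [Ne.symm]

lemma exists_isCrossChoice_of_inter_nonempty (hA : ∀ i, 2 < #(A i)) (hB : ∀ j, 2 < #(B j))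
    (h : (A 0 ∩ A 1).Nonempty) : ∃ x y, IsCrossChoice A B x y := by
  obtain ⟨z, hz⟩ := h
  rw [mem_inter] at hz
  obtain ⟨y₀, hy₀, hy₀z, -⟩ := exists_mem_ne_and_ne (hB 0) z z
  obtain ⟨y₁, hy₁, hy₁z, -⟩ := exists_mem_ne_and_ne (hB 1) z z
  obtain ⟨x₂, hx₂, hx₂y₀, hx₂y₁⟩ := exists_mem_ne_and_ne (hA 2) y₀ y₁
  obtain ⟨x₃, hx₃, hx₃y₀, hx₃y₁⟩ := exists_mem_ne_and_ne (hA 3) y₀ y₁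
  obtain ⟨y₂, hy₂, hy₂z, hy₂x₃⟩ := exists_mem_ne_and_ne (hB 2) z x₃
  obtain ⟨y₃, hy₃, hy₃z, hy₃x₂⟩ := exists_mem_ne_and_ne (hB 3) z x₂
  refine ⟨![z, z, x₂, x₃], ![y₀, y₁, y₂, y₃], ?_, ?_, ?_⟩
  · intro i; fin_cases i <;> simp [hz, hx₂, hx₃]
  · intro j; fin_cases j <;> simp [hy₀, hy₁, hy₂, hy₃]
  · intro i j hij
    fin_cases i <;> fin_cases j <;> simp_all [Ne.symm]

lemma exists_isCrossChoice_of_pairwise_disjoint (hA : ∀ i, #(A i) = 3) (hB : ∀ j, #(B j) = 3)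
    (hdisj : Pairwise (Disjoint on A)) : ∃ x y, IsCrossChoice A B x y := by
  have hx : ∀ i, ∃ v ∈ A i, v ∉ B (i - 1) ∨ A i ⊆ B (i - 1) := by
    intro i
    by_cases h : A i ⊆ B (i - 1)
    · obtain ⟨v, hv⟩ := card_pos.mp (hA i ▸ three_pos : 0 < #(A i))
      exact ⟨v, hv, Or.inr h⟩
    · obtain ⟨v, hv, hvB⟩ := not_subset.mp h
      exact ⟨v, hv, Or.inl hvB⟩
  choose x hxA hxB using hx
  have hne : ∀ j : Fin 4, j + 1 ≠ j ∧ j + 2 ≠ j ∧ j + 2 ≠ j + 1 := by decide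
  have hy : ∀ j, ∃ b ∈ B j, ∀ i, i ≠ j → x i ≠ b := by
    intro j
    have hB3 : Fintype.card (Fin 4) < #(B j) + 2 := by simp [hB j]
    have hxB' := hxB (j + 1)
    rw [add_sub_cancel_right] at hxB'
    rcases hxB' with hout | hsub
    · exact exists_mem_forall_ne_of_notMem hB3 x (hne j).1 hout
    · have heq : A (j + 1) = B j := eq_of_subset_of_card_le hsub (by rw [hA, hB])
      refine exists_mem_forall_ne_of_notMem hB3 x (hne j).2.1 ?_
      rw [← heq]
      exact disjoint_left.mp (hdisj (hne j).2.2) (hxA _)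
  choose y hyB hxy using hy
  exact ⟨x, y, hxA, hyB, fun i j hij => hxy j i hij⟩

theorem exists_isCrossChoice (hA : ∀ i, #(A i) = 3) (hB : ∀ j, #(B j) = 3) :
    ∃ x y, IsCrossChoice A B x y := by
  by_cases hdisj : Pairwise (Disjoint on A)
  · exact exists_isCrossChoice_of_pairwise_disjoint hA hB hdisj
  obtain ⟨i, j, hij, hint⟩ : ∃ i j, i ≠ j ∧ ¬Disjoint (A i) (A j) := by
    simpa [Pairwise] using hdisj
  obtain ⟨σ, rfl, rfl⟩ := MulAction.is_two_pretransitive_iff.mp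
    (Equiv.Perm.isMultiplyPretransitive (Fin 4) 2) zero_ne_one hij
  obtain ⟨x, y, h⟩ := exists_isCrossChoice_of_inter_nonempty (A := A ∘ σ) (B := B ∘ σ)
    (fun _ => by simp [hA]) (fun _ => by simp [hB]) (not_disjoint_iff_nonempty_inter.mp hint)
  exact ⟨_, _, h.of_comp σ⟩

theorem exists_isCrossChoice_nonconstant (hA : ∀ i, #(A i) = 3) (hB : ∀ j, #(B j) = 3) :
    ∃ x y, IsCrossChoice A B x y ∧ (∀ k, ∃ i, x i ≠ k) ∧ ∀ k, ∃ j, y j ≠ k := by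
  have hA' (i : Fin 4) : 2 < #(A i) := by simp [hA]
  have hB' (j : Fin 4) : 2 < #(B j) := by simp [hB]
  by_cases hzA : ∃ z, ∀ i, z ∈ A i
  · obtain ⟨z, hz⟩ := hzA
    exact exists_isCrossChoice_nonconstant_of_forall_mem hA' hB' hz
  by_cases hzB : ∃ z, ∀ j, z ∈ B j
  · obtain ⟨z, hz⟩ := hzB
    obtain ⟨y, x, h, hy, hx⟩ := exists_isCrossChoice_nonconstant_of_forall_mem hB' hA' hz
    exact ⟨x, y, h.symm, hx, hy⟩
  obtain ⟨x, y, h⟩ := exists_isCrossChoice hA hB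
  exact ⟨x, y, h, exists_apply_ne_of_forall_mem h.1 hzA,
    exists_apply_ne_of_forall_mem h.2.1 hzB⟩

end FourLists

section CountingColors

variable {ι α : Type*} [Fintype ι] [DecidableEq α] {x y : ι → α}

lemma card_filter_apply_eq_le_one (hxy : ∀ i j, i ≠ j → x i ≠ y j) {j : ι} {k : α}
    (hj : y j = k) : #{i | x i = k} ≤ 1 :=
  card_le_one.mpr fun a ha b hb => by
    simp only [mem_filter, mem_univ, true_and] at ha hb
    have hxj {i : ι} (hi : x i = k) : i = j := by_contra fun h => hxy i j h (hi.trans hj.symm)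
    rw [hxj ha, hxj hb]

lemma card_filter_apply_eq_lt {k : α} (hx : ∃ i, x i ≠ k) :
    #{i | x i = k} < Fintype.card ι := by
  obtain ⟨i, hi⟩ := hx
  exact card_lt_univ_of_notMem (x := i) (by simpa using hi)

lemma card_filter_add_card_filter_le (hxy : ∀ i j, i ≠ j → x i ≠ y j) (hx : ∀ k, ∃ i, x i ≠ k)
    (hy : ∀ k, ∃ j, y j ≠ k) (k : α) :
    #{i | x i = k} + #{j | y j = k} ≤ max 2 (Fintype.card ι - 1) := by
  by_cases hxk : ∃ i, x i = k
  · by_cases hyk : ∃ j, y j = k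
    · obtain ⟨i, hi⟩ := hxk
      obtain ⟨j, hj⟩ := hyk
      have := card_filter_apply_eq_le_one hxy hj
      have := card_filter_apply_eq_le_one (fun j i hji => (hxy i j hji.symm).symm) hi
      omega
    · have : #{j | y j = k} = 0 := card_eq_zero.mpr <| filter_eq_empty_iff.mpr <| by simpa using hyk
      have := card_filter_apply_eq_lt (hx k)
      omega
  · have : #{i | x i = k} = 0 := card_eq_zero.mpr <| filter_eq_empty_iff.mpr <| by simpa using hxk
    have := card_filter_apply_eq_lt (hy k)
    omega

end CountingColors

noncomputable def prismFourEquiv : Fin 2 × Fin 4 ≃ Fin 4 × Fin 2 :=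
  Equiv.ofBijective (fun p => ![![(0, 0), (2, 0), (1, 1), (3, 1)],
    ![(2, 1), (0, 1), (3, 0), (1, 0)]] p.1 p.2) (by decide)

lemma prism_four_adj_prismFourEquiv (p q : Fin 2 × Fin 4) :
    (prism 4).Adj (prismFourEquiv p) (prismFourEquiv q) ↔ p.1 ≠ q.1 ∧ p.2 ≠ q.2 := by
  simp only [prismFourEquiv, Equiv.ofBijective_apply, prism, SimpleGraph.fromRel_adj]
  revert p q
  decide

noncomputable def prismFourColoring (x y : Fin 4 → ℕ) : Fin 4 × Fin 2 → ℕ :=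
  fun v => ![x, y] (prismFourEquiv.symm v).1 (prismFourEquiv.symm v).2

lemma isProperListColoring_prismFourColoring {L : Fin 4 × Fin 2 → Finset ℕ} {x y : Fin 4 → ℕ}
    (h : IsCrossChoice (fun i => L (prismFourEquiv (0, i))) (fun j => L (prismFourEquiv (1, j)))
      x y) :
    IsProperListColoring L (prismFourColoring x y) := by
  obtain ⟨hx, hy, hxy⟩ := h
  simp only [IsProperListColoring, ← prismFourEquiv.forall_congr_right,
    prism_four_adj_prismFourEquiv]
  refine ⟨fun ⟨a, i⟩ => ?_, fun ⟨a, i⟩ ⟨b, j⟩ ⟨hab, hij⟩ => ?_⟩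
  · fin_cases a
    exacts [by simpa [prismFourColoring] using hx i, by simpa [prismFourColoring] using hy i]
  · fin_cases a <;> fin_cases b
    all_goals simp_all [prismFourColoring]
    exact fun h => hxy j i (Ne.symm hij) h.symm

lemma card_colorClass_prismFourColoring (x y : Fin 4 → ℕ) (k : ℕ) :
    #(colorClass (prismFourColoring x y) k) = #{i | x i = k} + #{j | y j = k} := by
  rw [card_equiv prismFourEquiv.symm (t := {p | ![x, y] p.1 p.2 = k})
    (by simp [colorClass, prismFourColoring])]
  simp only [card_filter, Fintype.sum_prod_type, Fin.sum_univ_two]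
  rfl

/-- The prism graph `Π_4` is equitably 3-choosable: every 3-uniform list assignment `L`
admits a proper `L`-coloring in which every color class contains at most 3 vertices. -/
theorem prism_four_equitably_three_choosable
    (L : Fin 4 × Fin 2 → Finset ℕ) (hL : ∀ v, (L v).card = 3) :
    ∃ c : Fin 4 × Fin 2 → ℕ, IsProperListColoring L c ∧
      ∀ k : ℕ, (colorClass c k).card ≤ 3 := by
  obtain ⟨x, y, h, hx, hy⟩ := exists_isCrossChoice_nonconstant
    (A := fun i => L (prismFourEquiv (0, i))) (B := fun j => L (prismFourEquiv (1, j)))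
    (fun _ => hL _) (fun _ => hL _)
  refine ⟨prismFourColoring x y, isProperListColoring_prismFourColoring h, fun k => ?_⟩
  rw [card_colorClass_prismFourColoring]
  exact card_filter_add_card_filter_le h.2.2 hx hy k
end

section
/- Let n ≥ 6, let L be a 3-uniform list assignment of the prism graph Π_n in which all vertices receive the same list, and let c be a lex-min proper L-coloring of Π_n. Then every color class of c contains at most ⌈2n/3⌉ vertices. -/
/-- The color word of `c`: the sizes of the nonempty color classes of `c`,
listed in decreasing order. -/
def colorWord {n : ℕ} (c : Fin n × Fin 2 → ℕ) : List ℕ :=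
  (((Finset.univ.image c).val.map (fun k => (colorClass c k).card)).sort (· ≤ ·)).reverse

/-- `c` is a lex-min proper `L`-coloring: it is a proper `L`-coloring and no proper
`L`-coloring has a lexicographically smaller color word. -/
def IsLexMin {n : ℕ} (L : Fin n × Fin 2 → Finset ℕ) (c : Fin n × Fin 2 → ℕ) : Prop :=
  IsProperListColoring L c ∧
    ∀ c', IsProperListColoring L c' → ¬ List.Lex (· < ·) (colorWord c') (colorWord c)

/-!
A lex-min coloring minimizes the largest color class, since that is the first letter of the
color word. So it suffices to exhibit one proper coloring from the common list `{a, b, c}` with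
all classes of size at most `n - ⌊n/3⌋ = ⌈2n/3⌉`. Color the vertex `(i, j)` by
`p(i) + j mod 3`, where `p` runs through `0, 1, 2, 0, 1, 2, …` on the first `3⌊n/3⌋` positions
of the cycle and is shifted by one on the remaining `n mod 3` positions, which keeps the
colors of consecutive positions distinct around the whole cycle. A column `i` meets the class
of `t` at most once, and not at all when `p(i) ≡ t + 1`, which happens for at least `⌊n/3⌋`
columns.
-/

open Finset

lemma le_headD_of_mem_of_pairwise_ge {l : List ℕ} (hl : l.Pairwise (· ≥ ·)) {x : ℕ}
    (hx : x ∈ l) : x ≤ l.headD 0 := by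
  cases l with
  | nil => simp at hx
  | cons y t =>
    rcases List.mem_cons.mp hx with rfl | hxt
    · exact le_rfl
    · exact List.rel_of_pairwise_cons hl hxt

lemma lex_lt_of_headD_lt {l₁ l₂ : List ℕ} (h : l₁.headD 0 < l₂.headD 0) :
    List.Lex (· < ·) l₁ l₂ := by
  cases l₁ with
  | nil => cases l₂ with
    | nil => simp at h
    | cons y t => exact List.Lex.nil
  | cons x t₁ => cases l₂ with
    | nil => simp at h
    | cons y t₂ => exact List.Lex.rel h

section ColorWord

variable {n : ℕ}

lemma mem_colorWord {c : Fin n × Fin 2 → ℕ} {x : ℕ} :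
    x ∈ colorWord c ↔ ∃ v, (colorClass c (c v)).card = x := by
  simp only [colorWord, List.mem_reverse, Multiset.mem_sort, Multiset.mem_map, mem_val, mem_image,
    mem_univ, true_and]
  exact ⟨fun ⟨_, ⟨v, hv⟩, h⟩ => ⟨v, hv ▸ h⟩, fun ⟨v, h⟩ => ⟨_, ⟨v, rfl⟩, h⟩⟩

lemma card_colorClass_le_headD_colorWord (c : Fin n × Fin 2 → ℕ) (k : ℕ) :
    (colorClass c k).card ≤ (colorWord c).headD 0 := by
  obtain h | ⟨v, hv⟩ := (colorClass c k).eq_empty_or_nonempty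
  · simp [h]
  have hk : c v = k := (mem_filter.mp hv).2
  apply le_headD_of_mem_of_pairwise_ge
  · exact List.pairwise_reverse.mpr (Multiset.pairwise_sort _ _)
  · exact mem_colorWord.mpr ⟨v, by rw [hk]⟩

lemma headD_colorWord_le {c : Fin n × Fin 2 → ℕ} {B : ℕ}
    (hB : ∀ k, (colorClass c k).card ≤ B) : (colorWord c).headD 0 ≤ B := by
  cases hw : colorWord c with
  | nil => exact Nat.zero_le B
  | cons x t =>
    obtain ⟨v, hv⟩ := mem_colorWord.mp (hw ▸ List.mem_cons_self : x ∈ colorWord c)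
    exact hv ▸ hB (c v)

lemma IsLexMin.card_colorClass_le {L : Fin n × Fin 2 → Finset ℕ} {c c' : Fin n × Fin 2 → ℕ}
    {B : ℕ} (hc : IsLexMin L c) (hc' : IsProperListColoring L c')
    (hB : ∀ k, (colorClass c' k).card ≤ B) (k : ℕ) : (colorClass c k).card ≤ B := by
  refine (card_colorClass_le_headD_colorWord c k).trans ?_
  by_contra! hlt
  exact hc.2 c' hc' (lex_lt_of_headD_lt ((headD_colorWord_le hB).trans_lt hlt))

lemma card_colorClass_comp_le {α : Type*} [DecidableEq α] {f : α → ℕ} (hf : Function.Injective f)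
    {g : Fin n × Fin 2 → α} {B : ℕ} (hB : ∀ a, (univ.filter (g · = a)).card ≤ B) (k : ℕ) :
    (colorClass (f ∘ g) k).card ≤ B := by
  by_cases hk : ∃ a, f a = k
  · obtain ⟨a, rfl⟩ := hk
    simpa [colorClass, hf.eq_iff] using hB a
  · push Not at hk
    simp [colorClass, hk]

end ColorWord

def cyclePattern (n i : ℕ) : ℕ := i % 3 + if 3 * (n / 3) ≤ i then 1 else 0

lemma cyclePattern_mod_ne_succ {n i : ℕ} (hn : 3 ≤ n) (hi : i < n) :
    cyclePattern n i % 3 ≠ cyclePattern n ((i + 1) % n) % 3 := by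
  rcases (show i + 1 < n ∨ i + 1 = n by omega) with h | h
  · rw [Nat.mod_eq_of_lt h]
    unfold cyclePattern; split_ifs <;> omega
  · rw [h, Nat.mod_self]
    unfold cyclePattern; split_ifs <;> omega

lemma card_cyclePattern_mod_eq_ge (n : ℕ) {s : ℕ} (hs : s < 3) :
    n / 3 ≤ (univ.filter (fun i : Fin n => cyclePattern n i % 3 = s)).card := by
  rcases Nat.eq_zero_or_pos n with rfl | hpos
  · simp
  calc n / 3 = (range (n / 3)).card := (card_range _).symm
    _ ≤ _ := card_le_card_of_injOn (fun q => (⟨(3 * q + s) % n, Nat.mod_lt _ hpos⟩ : Fin n))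
        (fun q hq => by
          rw [coe_range, Set.mem_Iio] at hq
          simp only [coe_filter, mem_univ, true_and, Set.mem_ofPred_eq,
            Nat.mod_eq_of_lt (show 3 * q + s < n by omega)]
          unfold cyclePattern; split_ifs <;> omega)
        (fun q hq q' hq' h => by
          rw [coe_range, Set.mem_Iio] at hq hq'
          simp only [Fin.mk.injEq] at h
          rw [Nat.mod_eq_of_lt (show 3 * q + s < n by omega),
            Nat.mod_eq_of_lt (show 3 * q' + s < n by omega)] at h
          omega)

def prismColoring (n : ℕ) (v : Fin n × Fin 2) : Fin 3 :=
  ⟨(cyclePattern n v.1 + v.2) % 3, Nat.mod_lt _ (by norm_num)⟩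

lemma prismColoring_ne_of_adj {n : ℕ} (hn : 3 ≤ n) {v w : Fin n × Fin 2}
    (h : (prism n).Adj v w) : prismColoring n v ≠ prismColoring n w := by
  have hsucc {v w : Fin n × Fin 2} (h1 : v.2 = w.2) (h2 : w.1.val = (v.1.val + 1) % n) :
      prismColoring n v ≠ prismColoring n w := by
    have := cyclePattern_mod_ne_succ hn v.1.isLt
    simp only [prismColoring, ne_eq, Fin.mk.injEq, h1, ← h2] at this ⊢
    omega
  have hcol {v w : Fin n × Fin 2} (h1 : v.1 = w.1) (h2 : v.2 ≠ w.2) :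
      prismColoring n v ≠ prismColoring n w := by
    have := Fin.val_ne_of_ne h2
    have := v.2.isLt; have := w.2.isLt
    simp only [prismColoring, ne_eq, Fin.mk.injEq, h1]
    omega
  rw [prism, SimpleGraph.fromRel_adj] at h
  rcases h.2 with (⟨h1, h2⟩ | ⟨h1, h2⟩) | (⟨h1, h2⟩ | ⟨h1, h2⟩)
  · exact hcol h1 h2
  · exact hsucc h1 h2
  · exact (hcol h1 h2).symm
  · exact (hsucc h1 h2).symm

lemma card_prismColoring_eq_le {n : ℕ} (t : Fin 3) :
    (univ.filter (prismColoring n · = t)).card ≤ n - n / 3 := by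
  set s := (t.val + 1) % 3
  have hcols : (univ.filter (prismColoring n · = t)).card ≤
      (univ.filter (fun i : Fin n => ¬ cyclePattern n i % 3 = s)).card := by
    refine card_le_card_of_injOn Prod.fst (fun v hv => ?_) (fun v hv w hw hvw => ?_)
    · simp only [coe_filter, mem_univ, true_and, Set.mem_ofPred_eq, prismColoring,
        Fin.ext_iff] at hv ⊢
      have := v.2.isLt
      omega
    · simp only [coe_filter, mem_univ, true_and, Set.mem_ofPred_eq, prismColoring,
        Fin.ext_iff] at hv hw
      have := v.2.isLt; have := w.2.isLt
      exact Prod.ext hvw (Fin.ext (by rw [hvw] at hv; omega))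
  have hsplit := card_filter_add_card_filter_not (s := (univ : Finset (Fin n)))
    (fun i => cyclePattern n i % 3 = s)
  have := card_cyclePattern_mod_eq_ge n (s := s) (Nat.mod_lt _ (by norm_num))
  rw [card_univ, Fintype.card_fin] at hsplit
  omega

theorem exists_properListColoring_const_card_colorClass_le {n : ℕ} (hn : 3 ≤ n)
    {S : Finset ℕ} (hS : S.card = 3) :
    ∃ c, IsProperListColoring (fun _ : Fin n × Fin 2 => S) c ∧
      ∀ k, (colorClass c k).card ≤ n - n / 3 := by
  set f := S.orderEmbOfFin hS
  refine ⟨f ∘ prismColoring n, ⟨fun v => S.orderEmbOfFin_mem hS _, fun v w h => ?_⟩,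
    card_colorClass_comp_le f.injective card_prismColoring_eq_le⟩
  exact f.injective.ne (prismColoring_ne_of_adj hn h)

/-- If `n ≥ 6`, `L` is a 3-uniform list assignment of `Π_n` in which all vertices get
the same list, and `c` is a lex-min proper `L`-coloring, then every color class of `c`
has at most `⌈2n/3⌉` vertices. -/
theorem lexmin_constant_lists_bounded (n : ℕ) (hn : 6 ≤ n)
    (L : Fin n × Fin 2 → Finset ℕ) (hL : ∀ v, (L v).card = 3)
    (hsame : ∀ v w, L v = L w)
    (c : Fin n × Fin 2 → ℕ) (hc : IsLexMin L c) :
    ∀ k : ℕ, (colorClass c k).card ≤ 2 * n ⌈/⌉ 3 := by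
  intro k
  let v₀ : Fin n × Fin 2 := (⟨0, by omega⟩, 0)
  have hconst : L = fun _ => L v₀ := funext fun v => hsame v v₀
  obtain ⟨c', hc', hbal⟩ :=
    exists_properListColoring_const_card_colorClass_le (n := n) (by omega) (hL v₀)
  rw [← hconst] at hc'
  have hceil : 2 * n ⌈/⌉ 3 = n - n / 3 := by rw [Nat.ceilDiv_eq_add_pred_div]; omega
  exact hceil ▸ hc.card_colorClass_le hc' hbal k
end

section
/- Let n ≥ 6, let L be a 3-uniform list assignment of the prism graph Π_n, and let c be a lex-min proper L-coloring of Π_n whose largest color class (Blue) has more than ⌈2n/3⌉ vertices. Let Red denote a largest color class among the remaining colors. If |Red| = |Blue| or |Red| = |Blue| − 1, then every color class of c other than Blue and Red has at most |Red| − 2 vertices (and hence at most |Blue| − 2 vertices). -/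
/-!
Blue has more than `⌈2n/3⌉` vertices, so a third class with at least `|Red| - 1` vertices forces
the three class sizes `(m+3, m+2, m+1)` with `3(m+2) = 2n`, and no further colour is used. Such a
colouring is never lex-min. If some list holds a colour outside the three, recolouring one vertex
with it lowers one entry of the word and appends a `1`. Otherwise all lists equal the three
colours, and colouring `(i, j)` by `i + j mod 3` is proper (as `3 ∣ n`) with word
`(m+2, m+2, m+2)`.
-/

open Finset

section

variable {n : ℕ} {c : Fin n × Fin 2 → ℕ}

@[simp] lemma mem_colorClass {a : ℕ} {v : Fin n × Fin 2} : v ∈ colorClass c a ↔ c v = a := by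
  simp [colorClass]

lemma sum_card_colorClass (c : Fin n × Fin 2 → ℕ) (t : Finset ℕ) :
    ∑ a ∈ t, #(colorClass c a) = #{v | c v ∈ t} := by
  rw [card_eq_sum_card_fiberwise (s := {v | c v ∈ t}) (f := c) fun v hv => (mem_filter.1 hv).2]
  refine sum_congr rfl fun a ha => congrArg card (ext fun v => ?_)
  simp only [mem_colorClass, mem_filter, mem_univ, true_and]
  exact ⟨fun h => ⟨h ▸ ha, h⟩, And.right⟩

lemma sum_card_colorClass_le (c : Fin n × Fin 2 → ℕ) (t : Finset ℕ) :
    ∑ a ∈ t, #(colorClass c a) ≤ 2 * n := by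
  rw [sum_card_colorClass]
  simpa [mul_comm] using card_le_univ (α := Fin n × Fin 2) _

lemma mem_of_sum_card_colorClass_eq {t : Finset ℕ} (h : ∑ a ∈ t, #(colorClass c a) = 2 * n)
    (v : Fin n × Fin 2) : c v ∈ t := by
  by_contra hv
  have hlt : #{w | c w ∈ t} < #(univ : Finset (Fin n × Fin 2)) :=
    card_lt_card ⟨subset_univ _, fun h => hv (mem_filter.1 (h (mem_univ v))).2⟩
  rw [← sum_card_colorClass, h] at hlt
  simp [mul_comm] at hlt

lemma colorWord_eq_map {cs : List ℕ} (hnd : cs.Nodup) (hcover : ∀ v, c v ∈ cs)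
    (hpos : ∀ a ∈ cs, (colorClass c a).Nonempty)
    (hsorted : (cs.map fun a => #(colorClass c a)).Pairwise (· ≥ ·)) :
    colorWord c = cs.map fun a => #(colorClass c a) := by
  have himage : (univ.image c).val = cs := by
    rw [show univ.image c = cs.toFinset from ext fun a => ?_, List.toFinset_val, hnd.dedup]
    simp only [mem_image, mem_univ, true_and, List.mem_toFinset]
    exact ⟨fun ⟨v, hv⟩ => hv ▸ hcover v, fun ha => (hpos a ha).imp fun _ => mem_colorClass.1⟩
  rw [colorWord, himage, Multiset.map_coe, ← List.reverse_reverse (List.map _ cs)]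
  congr 1
  refine List.Perm.eq_of_pairwise' (Multiset.pairwise_sort ..) (List.pairwise_reverse.2 hsorted) ?_
  exact Multiset.coe_eq_coe.1 (Multiset.sort_eq ..) |>.trans (List.reverse_perm _)

lemma colorClass_update_of_ne {v : Fin n × Fin 2} {x a : ℕ} (ha : a ≠ x) :
    colorClass (Function.update c v x) a = (colorClass c a).erase v := by
  ext w
  rcases eq_or_ne w v with rfl | hw
  · simp [Ne.symm ha]
  · simp [hw]

lemma colorClass_update_self {v : Fin n × Fin 2} {x : ℕ} (hx : ∀ w, c w ≠ x) :
    colorClass (Function.update c v x) x = {v} := by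
  ext w
  rcases eq_or_ne w v with rfl | hw
  · simp
  · simp [hw, hx]

lemma IsProperListColoring.update {L : Fin n × Fin 2 → Finset ℕ} (hc : IsProperListColoring L c)
    {v : Fin n × Fin 2} {x : ℕ} (hxL : x ∈ L v) (hx : ∀ w, c w ≠ x) :
    IsProperListColoring L (Function.update c v x) := by
  refine ⟨fun w => ?_, fun w w' hadj => ?_⟩
  · rcases eq_or_ne w v with rfl | hw
    · simpa using hxL
    · simpa [hw] using hc.1 w
  · have hne := hadj.ne
    rcases eq_or_ne w v with rfl | hw
    · simpa [hne.symm] using (hx w').symm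
    rcases eq_or_ne w' v with rfl | hw'
    · simpa [hw] using hx w
    · simpa [hw, hw'] using hc.2 w w' hadj

lemma colorWord_update_lex_lt {b r k m : ℕ} (hbr : b ≠ r) (hbk : b ≠ k) (hrk : r ≠ k)
    (hcover : ∀ w, c w ∈ [b, r, k]) (hB : #(colorClass c b) = m + 3)
    (hR : #(colorClass c r) = m + 2) (hK : #(colorClass c k) = m + 1) (hm : 1 ≤ m)
    (v : Fin n × Fin 2) {x : ℕ} (hx : x ∉ [b, r, k]) :
    List.Lex (· < ·) (colorWord (Function.update c v x)) [m + 3, m + 2, m + 1] := by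
  have hfresh : ∀ w, c w ≠ x := fun w hw => hx (hw ▸ hcover w)
  simp only [List.mem_cons, List.not_mem_nil, or_false, not_or] at hx hcover
  obtain ⟨hxb, hxr, hxk⟩ := hx
  have hold {a : ℕ} (ha : a ≠ x) : #(colorClass (Function.update c v x) a)
      = #(colorClass c a) - if c v = a then 1 else 0 := by
    rw [colorClass_update_of_ne ha, card_erase_eq_ite]
    split_ifs <;> simp_all
  have hsizes : [b, r, k, x].map (fun a => #(colorClass (Function.update c v x) a)) =
      [m + 3 - if c v = b then 1 else 0, m + 2 - if c v = r then 1 else 0,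
        m + 1 - if c v = k then 1 else 0, 1] := by
    simp [hold (Ne.symm hxb), hold (Ne.symm hxr), hold (Ne.symm hxk),
      colorClass_update_self hfresh, hB, hR, hK]
  have hpos : ∀ y ∈ [b, r, k, x].map (fun a => #(colorClass (Function.update c v x) a)), 0 < y := by
    rw [hsizes]; split_ifs <;> simp <;> omega
  rw [colorWord_eq_map (cs := [b, r, k, x]), hsizes]
  · rcases hcover v with h | h | h <;> simp [h, hbr, hbk, hrk, hbr.symm, hbk.symm, hrk.symm]
    all_goals exact List.Lex.rel (r := (· < ·)) (by omega)
  · simp [hbr, hbk, hrk, Ne.symm hxb, Ne.symm hxr, Ne.symm hxk]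
  · intro w; rcases eq_or_ne w v with rfl | hw
    · simp
    · simp only [Function.update_of_ne hw]; rcases hcover w with h | h | h <;> simp [h]
  · exact fun a ha => card_pos.1 (List.forall_mem_map.1 hpos a ha)
  · rw [hsizes]; split_ifs <;> simp <;> omega

end

section

variable {n : ℕ}

def stripe (v : Fin n × Fin 2) : Fin 3 := ⟨(v.1.val + v.2.val) % 3, Nat.mod_lt _ three_pos⟩

lemma stripe_ne_of_adj (hn : 3 ∣ n) {v w : Fin n × Fin 2} (hadj : (prism n).Adj v w) :
    stripe v ≠ stripe w := by
  have key : ∀ u u' : Fin n × Fin 2,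
      (u.1 = u'.1 ∧ u.2 ≠ u'.2) ∨ (u.2 = u'.2 ∧ u'.1.val = (u.1.val + 1) % n) →
      stripe u ≠ stripe u' := by
    rintro ⟨i, j⟩ ⟨i', j'⟩ h
    simp only [stripe, Ne, Fin.ext_iff] at h ⊢
    have := i.isLt; have := j.isLt; have := j'.isLt
    rcases h with ⟨hi, hj⟩ | ⟨hj, hi⟩
    · rw [hi]; omega
    · rcases Nat.lt_or_ge (i.val + 1) n with h | h
      · rw [Nat.mod_eq_of_lt h] at hi; omega
      · rw [show i.val + 1 = n by omega, Nat.mod_self] at hi; omega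
  rw [prism, SimpleGraph.fromRel_adj] at hadj
  rcases hadj.2 with h | h
  · exact key v w h
  · exact (key w v h).symm

lemma count_add_mod_three_eq (hn : 3 ∣ n) (j : ℕ) {s : ℕ} (hs : s < 3) :
    Nat.count (fun i => (i + j) % 3 = s) n = n / 3 := by
  have hmod : (fun i => (i + j) % 3 = s) = (· ≡ s + 2 * j [MOD 3]) := by
    ext i; simp only [Nat.ModEq]; omega
  simp [hmod, Nat.count_modEq_card _ three_pos, Nat.mod_eq_zero_of_dvd hn]

lemma card_filter_stripe_eq (hn : 3 ∣ n) (s : Fin 3) :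
    #{v : Fin n × Fin 2 | stripe v = s} = 2 * (n / 3) := by
  have hrow : ∀ j : Fin 2, ∑ i : Fin n, (if stripe (i, j) = s then 1 else 0) = n / 3 := by
    intro j
    simp only [stripe, Fin.ext_iff]
    rw [Fin.sum_univ_eq_sum_range (fun i => if (i + j.val) % 3 = s.val then 1 else 0), sum_boole,
      ← Nat.count_eq_card_filter_range]
    exact count_add_mod_three_eq hn _ s.isLt
  rw [card_filter, Fintype.sum_prod_type_right, Fin.sum_univ_two, hrow, hrow]
  ring

lemma colorClass_comp_stripe {f : Fin 3 → ℕ} (hf : Function.Injective f) (s : Fin 3) :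
    colorClass (f ∘ stripe) (f s) = ({v | stripe v = s} : Finset (Fin n × Fin 2)) := by
  ext v; simp [hf.eq_iff]

lemma isProperListColoring_comp_stripe (hn : 3 ∣ n) {L : Fin n × Fin 2 → Finset ℕ}
    {f : Fin 3 → ℕ} (hf : Function.Injective f) (hL : ∀ v s, f s ∈ L v) :
    IsProperListColoring L (f ∘ stripe) :=
  ⟨fun v => hL v _, fun _ _ hadj => hf.ne (stripe_ne_of_adj hn hadj)⟩

lemma colorWord_comp_stripe (hn : 3 ∣ n) (hn0 : 0 < n) {f : Fin 3 → ℕ}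
    (hf : Function.Injective f) :
    colorWord (f ∘ stripe (n := n)) = [2 * (n / 3), 2 * (n / 3), 2 * (n / 3)] := by
  have hcard (s : Fin 3) : #(colorClass (f ∘ stripe (n := n)) (f s)) = 2 * (n / 3) := by
    rw [colorClass_comp_stripe hf, card_filter_stripe_eq hn]
  have hpos : 0 < 2 * (n / 3) := by omega
  rw [colorWord_eq_map (cs := [f 0, f 1, f 2])]
  · simp [hcard]
  · simp [hf.ne_iff]
  · intro v; simp only [Function.comp_apply, List.mem_cons]; generalize stripe v = s
    fin_cases s <;> simp
  · simp only [List.mem_cons, List.not_mem_nil, or_false]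
    rintro a (rfl | rfl | rfl) <;> exact card_pos.1 (hcard _ ▸ hpos)
  · simp [hcard]

end

lemma exists_colorWord_lex_lt_of_card_colorClass {n : ℕ} {L : Fin n × Fin 2 → Finset ℕ}
    (hL : ∀ v, #(L v) = 3) {c : Fin n × Fin 2 → ℕ} (hc : IsProperListColoring L c)
    {b r k m : ℕ} (hbr : b ≠ r) (hbk : b ≠ k) (hrk : r ≠ k) (hB : #(colorClass c b) = m + 3)
    (hR : #(colorClass c r) = m + 2) (hK : #(colorClass c k) = m + 1)
    (hn : 2 * n = 3 * (m + 2)) (hm : 1 ≤ m) :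
    ∃ c', IsProperListColoring L c' ∧ List.Lex (· < ·) (colorWord c') (colorWord c) := by
  have hcover : ∀ w, c w ∈ [b, r, k] := by
    simpa using mem_of_sum_card_colorClass_eq (c := c) (t := {b, r, k})
      (by simp [hbr, hbk, hrk, hB, hR, hK]; omega)
  have hword : colorWord c = [m + 3, m + 2, m + 1] := by
    rw [colorWord_eq_map (cs := [b, r, k])] <;> simp [hbr, hbk, hrk, hB, hR, hK, hcover, ← card_pos]
  rw [hword]
  by_cases hfresh : ∃ v, ∃ x ∈ L v, x ∉ [b, r, k]
  · obtain ⟨v, x, hxL, hx⟩ := hfresh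
    exact ⟨_, hc.update hxL fun w hw => hx (hw ▸ hcover w),
      colorWord_update_lex_lt hbr hbk hrk hcover hB hR hK hm v hx⟩
  · push Not at hfresh
    have hLv (v) : L v = {b, r, k} :=
      eq_of_subset_of_card_le (fun x hx => by simpa using hfresh v x hx)
        (by simp [hL, hbr, hbk, hrk])
    have hinj : Function.Injective ![b, r, k] := by
      intro s t h; fin_cases s <;> fin_cases t <;> simp_all [eq_comm]
    have h3 : 3 ∣ n := by omega
    refine ⟨_, isProperListColoring_comp_stripe h3 hinj fun v s => ?_, ?_⟩
    · rw [hLv v]; fin_cases s <;> simp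
    · rw [colorWord_comp_stripe h3 (by omega) hinj]
      exact List.Lex.rel (by omega)

/-- Let `c` be a lex-min proper `L`-coloring of `Π_n` (`n ≥ 6`, `L` 3-uniform) whose
largest color class Blue (color `b`) has more than `⌈2n/3⌉` vertices, and let Red
(color `r`) be a largest class among the other colors.  If `|Red| = |Blue|` or
`|Red| = |Blue| − 1`, then every other color class has at most `|Red| − 2` vertices
(and hence at most `|Blue| − 2` vertices). -/
theorem lexmin_blue_red_close_other_classes_small (n : ℕ) (hn : 6 ≤ n)
    (L : Fin n × Fin 2 → Finset ℕ) (hL : ∀ v, (L v).card = 3)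
    (c : Fin n × Fin 2 → ℕ) (hc : IsLexMin L c) (b r : ℕ)
    (hbmax : ∀ k : ℕ, (colorClass c k).card ≤ (colorClass c b).card)
    (hbig : 2 * n ⌈/⌉ 3 < (colorClass c b).card)
    (hrb : r ≠ b)
    (hrmax : ∀ k : ℕ, k ≠ b → (colorClass c k).card ≤ (colorClass c r).card)
    (hcase : (colorClass c r).card = (colorClass c b).card ∨
      (colorClass c r).card + 1 = (colorClass c b).card) :
    ∀ k : ℕ, k ≠ b → k ≠ r →
      (colorClass c k).card + 2 ≤ (colorClass c r).card ∧
      (colorClass c k).card + 2 ≤ (colorClass c b).card := by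
  intro k hkb hkr
  suffices hKR : #(colorClass c k) + 2 ≤ #(colorClass c r) from ⟨hKR, hKR.trans (hbmax r)⟩
  by_contra hKR
  have hsum := sum_card_colorClass_le c {b, r, k}
  simp only [sum_insert, sum_singleton, mem_insert, mem_singleton, hrb.symm, hkb.symm, hkr.symm,
    not_false_eq_true, or_self] at hsum
  have hceil : 2 * n ≤ 3 * (2 * n ⌈/⌉ 3) := (ceilDiv_le_iff_le_mul (by norm_num)).1 le_rfl
  have hKleR := hrmax k hkb
  obtain ⟨m, hB, hR, hK, hnm, hm⟩ : ∃ m, #(colorClass c b) = m + 3 ∧ #(colorClass c r) = m + 2 ∧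
      #(colorClass c k) = m + 1 ∧ 2 * n = 3 * (m + 2) ∧ 1 ≤ m :=
    ⟨#(colorClass c k) - 1, by omega⟩
  obtain ⟨c', hc', hlt⟩ := exists_colorWord_lex_lt_of_card_colorClass hL hc.1 hrb.symm hkb.symm
    hkr.symm hB hR hK hnm hm
  exact hc.2 c' hc' hlt
end

section
/- Let n ≥ 6, let L be a 3-uniform list assignment of the prism graph Π_n, and let c be a lex-min proper L-coloring of Π_n. Then every color class of c contains at most ⌈2n/3⌉ vertices. -/
/-!
A lex-min colouring first minimises its largest colour class, so it suffices to exhibit one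
proper `L`-colouring all of whose classes have at most `⌈2n/3⌉` vertices. A colour meets every
rung at most once, so it is enough that no colour occurs on all three rungs of any of the blocks
`{3j, 3j+1, 3j+2}`, `j < n/3`.

If all rungs carry the same pair of lists, repeat three pairwise compatible rungs with period
three. Otherwise rotate the prism, and possibly swap its two sides, so that some colour `a` of
the side-`0` list of rung `0` is missing from that of rung `n - 1`. Colour greedily from rung `0`
on, always choosing on side `0` a colour absent from the previous rung; two such steps in a row
leave no colour on three consecutive rungs. The cycle closes because side `0` of the last rung
can never clash with `a`: directly when `3 ∤ n`, and after a short case analysis of the last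
block when `3 ∣ n`.
-/

namespace Prism

open Finset Function

variable {F G : ℕ → Finset ℕ} {n : ℕ}

/-- Rung colours: `p.1` on side `0`, `p.2` on side `1`. -/
def IsRungPair (A B : Finset ℕ) (p : ℕ × ℕ) : Prop := p.1 ∈ A ∧ p.2 ∈ B ∧ p.1 ≠ p.2

def Linked (p q : ℕ × ℕ) : Prop := p.1 ≠ q.1 ∧ p.2 ≠ q.2

def Uses (p : ℕ × ℕ) (x : ℕ) : Prop := p.1 = x ∨ p.2 = x

instance (p : ℕ × ℕ) : DecidablePred (Uses p) := fun _ => inferInstanceAs (Decidable (_ ∨ _))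

def NoCommonColor (p q r : ℕ × ℕ) : Prop := ∀ x, ¬(Uses p x ∧ Uses q x ∧ Uses r x)

def IsFreshStep (p q : ℕ × ℕ) : Prop := q.1 ≠ p.1 ∧ q.1 ≠ p.2 ∧ q.2 ≠ p.2

theorem Linked.symm {p q : ℕ × ℕ} (h : Linked p q) : Linked q p := ⟨h.1.symm, h.2.symm⟩

theorem IsFreshStep.linked {p q : ℕ × ℕ} (h : IsFreshStep p q) : Linked p q :=
  ⟨h.1.symm, h.2.2.symm⟩

theorem noCommonColor_of_isFreshStep {p q r : ℕ × ℕ} (hpq : IsFreshStep p q)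
    (hqr : IsFreshStep q r) : NoCommonColor p q r := by
  obtain ⟨_, _, _⟩ := hpq
  obtain ⟨_, _, _⟩ := hqr
  rintro x ⟨hp | hp, hq | hq, hr | hr⟩ <;> omega

theorem noCommonColor_of_linked {p q r : ℕ × ℕ} (hpq : Linked p q) (hqr : Linked q r)
    (hrp : Linked r p) : NoCommonColor p q r := by
  obtain ⟨_, _⟩ := hpq
  obtain ⟨_, _⟩ := hqr
  obtain ⟨_, _⟩ := hrp
  rintro x ⟨hp | hp, hq | hq, hr | hr⟩ <;> omega

theorem exists_mem_ne_ne {s : Finset ℕ} (hs : #s = 3) (a b : ℕ) : ∃ x ∈ s, x ≠ a ∧ x ≠ b := by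
  obtain ⟨x, hx, hxab⟩ := exists_mem_notMem_of_card_lt_card (s := {a, b}) (t := s)
    (card_le_two.trans_lt (by omega))
  simp only [mem_insert, mem_singleton, not_or] at hxab
  exact ⟨x, hx, hxab⟩

theorem mem_and_ne_of_subset_triple {s : Finset ℕ} {a b c : ℕ} (hs : #s = 3)
    (h : s ⊆ {a, b, c}) : a ∈ s ∧ b ∈ s ∧ c ∈ s ∧ a ≠ b ∧ a ≠ c ∧ b ≠ c := by
  obtain rfl := eq_of_subset_of_card_le h (card_le_three.trans hs.ge)
  obtain ⟨x, y, z, hxy, hxz, hyz, he⟩ := card_eq_three.mp hs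
  have hx : x ∈ ({a, b, c} : Finset ℕ) := he ▸ by simp
  have hy : y ∈ ({a, b, c} : Finset ℕ) := he ▸ by simp
  have hz : z ∈ ({a, b, c} : Finset ℕ) := he ▸ by simp
  simp only [mem_insert, mem_singleton] at hx hy hz
  refine ⟨by simp, by simp, by simp, ?_, ?_, ?_⟩ <;> rintro rfl <;> omega

theorem exists_three_linked {A B : Finset ℕ} (hA : #A = 3) (hB : #B = 3) :
    ∃ p q r, IsRungPair A B p ∧ IsRungPair A B q ∧ IsRungPair A B r ∧
      Linked p q ∧ Linked q r ∧ Linked r p := by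
  obtain ⟨a₀, a₁, a₂, h₀₁, h₀₂, h₁₂, rfl⟩ := card_eq_three.mp hA
  -- match `A` with `B` off the diagonal: if `a₀ ∈ B`, put it under `a₂`; otherwise `b₀ ≠ a₀`
  -- holds for free
  suffices ∃ b₀ ∈ B, ∃ b₁ ∈ B, ∃ b₂ ∈ B, b₀ ≠ b₁ ∧ b₁ ≠ b₂ ∧ b₂ ≠ b₀ ∧
      a₀ ≠ b₀ ∧ a₁ ≠ b₁ ∧ a₂ ≠ b₂ by
    obtain ⟨b₀, hb₀, b₁, hb₁, b₂, hb₂, h₀, h₁, h₂, h₀', h₁', h₂'⟩ := this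
    exact ⟨(a₀, b₀), (a₁, b₁), (a₂, b₂), ⟨by simp, hb₀, h₀'⟩, ⟨by simp, hb₁, h₁'⟩,
      ⟨by simp, hb₂, h₂'⟩, ⟨h₀₁, h₀⟩, ⟨h₁₂, h₁⟩, ⟨h₀₂.symm, h₂⟩⟩
  by_cases ha₀ : a₀ ∈ B
  · obtain ⟨b₁, hb₁, h₁, h₁'⟩ := exists_mem_ne_ne hB a₁ a₀
    obtain ⟨b₀, hb₀, h₀, h₀'⟩ := exists_mem_ne_ne hB a₀ b₁
    exact ⟨b₀, hb₀, b₁, hb₁, a₀, ha₀, by omega, by omega, by omega, by omega, by omega, by omega⟩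
  · obtain ⟨b₁, hb₁, h₁⟩ := exists_mem_ne (by simp [hB] : 1 < #B) a₁
    obtain ⟨b₂, hb₂, h₂, h₂'⟩ := exists_mem_ne_ne hB a₂ b₁
    obtain ⟨b₀, hb₀, h₀, h₀'⟩ := exists_mem_ne_ne hB b₁ b₂
    exact ⟨b₀, hb₀, b₁, hb₁, b₂, hb₂, by omega, by omega, by omega,
      fun h => ha₀ (h ▸ hb₀), by omega, by omega⟩

theorem exists_closing_pair_of_subset {F₂ G₂ F₃ G₃ : Finset ℕ} (hF₃ : #F₃ = 3) (hG₃ : #G₃ = 3)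
    {c d w : ℕ} (hcd : c ≠ d) (hwc : w ≠ c) (hwd : w ≠ d) (hdF₂ : d ∈ F₂) (hwF₂ : w ∈ F₂)
    (hcG₂ : c ∈ G₂) (hwG₂ : w ∈ G₂) {s : ℕ × ℕ} (hs : s.1 ∉ F₃) :
    ∃ q₂ q₃, IsRungPair F₂ G₂ q₂ ∧ IsRungPair F₃ G₃ q₃ ∧ Linked (c, d) q₂ ∧ Linked q₂ q₃ ∧
      Linked q₃ s ∧ NoCommonColor (c, d) q₂ q₃ := by
  have hne : ∀ {x}, x ∈ F₃ → x ≠ s.1 := fun hx he => hs (he ▸ hx)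
  by_cases hβ : ∃ β ∈ G₃, β ≠ w ∧ β ≠ s.2 ∧ β ≠ d
  · obtain ⟨β, hβ, hβw, hβs, hβd⟩ := hβ
    obtain ⟨α, hα, hαd, hαβ⟩ := exists_mem_ne_ne hF₃ d β
    refine ⟨(d, w), (α, β), ⟨hdF₂, hwG₂, by omega⟩, ⟨hα, hβ, hαβ⟩, ⟨by omega, by omega⟩,
      ⟨by omega, by omega⟩, ⟨hne hα, hβs⟩, ?_⟩
    intro x; simp only [Uses]; omega
  · have hG₃w : G₃ ⊆ {w, s.2, d} := fun x hx => by
      by_contra h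
      simp only [mem_insert, mem_singleton, not_or] at h
      exact hβ ⟨x, hx, h.1, h.2.1, h.2.2⟩
    obtain ⟨hwG₃, -, hdG₃, hws, -, hsd⟩ := mem_and_ne_of_subset_triple hG₃ hG₃w
    obtain ⟨α, hα, hαw, hαc⟩ := exists_mem_ne_ne hF₃ w c
    let β := if α = d then w else d
    have hβ : β ∈ G₃ ∧ β ≠ c ∧ β ≠ s.2 ∧ α ≠ β := by
      by_cases h : α = d <;> simp only [β, h, if_true, if_false] <;>
        exact ⟨by assumption, by omega, by omega, by omega⟩
    obtain ⟨hβG₃, hβc, hβs, hαβ⟩ := hβ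
    refine ⟨(w, c), (α, β), ⟨hwF₂, hcG₂, hwc⟩, ⟨hα, hβG₃, hαβ⟩, ⟨by omega, by omega⟩,
      ⟨by omega, by omega⟩, ⟨hne hα, hβs⟩, ?_⟩
    intro x; simp only [Uses]; omega

theorem exists_closing_pair {F₂ G₂ F₃ G₃ : Finset ℕ} (hF₂ : #F₂ = 3) (hG₂ : #G₂ = 3)
    (hF₃ : #F₃ = 3) (hG₃ : #G₃ = 3) {c d : ℕ} (hcd : c ≠ d) {s : ℕ × ℕ} (hs : s.1 ∉ F₃) :
    ∃ q₂ q₃, IsRungPair F₂ G₂ q₂ ∧ IsRungPair F₃ G₃ q₃ ∧ Linked (c, d) q₂ ∧ Linked q₂ q₃ ∧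
      Linked q₃ s ∧ NoCommonColor (c, d) q₂ q₃ := by
  by_cases hgen : ∃ u ∈ F₂, ∃ v ∈ G₂, u ≠ v ∧ u ≠ c ∧ u ≠ d ∧ v ≠ c ∧ v ≠ d
  · -- the middle rung shares no colour with the first one
    obtain ⟨u, hu, v, hv, huv, huc, hud, hvc, hvd⟩ := hgen
    obtain ⟨β, hβ, hβv, hβs⟩ := exists_mem_ne_ne hG₃ v s.2
    obtain ⟨α, hα, hαu, hαβ⟩ := exists_mem_ne_ne hF₃ u β
    refine ⟨(u, v), (α, β), ⟨hu, hv, huv⟩, ⟨hα, hβ, hαβ⟩, ⟨by omega, by omega⟩,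
      ⟨by omega, by omega⟩, ⟨fun h : α = s.1 => hs (h ▸ hα), hβs⟩, ?_⟩
    intro x; simp only [Uses]; omega
  -- otherwise `F₂` and `G₂` both consist of `c`, `d` and one further colour `w`
  obtain ⟨w, hw, hwc, hwd⟩ := exists_mem_ne_ne hF₂ c d
  obtain ⟨v, hv, hvc, hvd⟩ := exists_mem_ne_ne hG₂ c d
  obtain rfl : w = v := by_contra fun h => hgen ⟨w, hw, v, hv, h, hwc, hwd, hvc, hvd⟩
  have hF₂w : F₂ ⊆ {c, d, w} := fun x hx => by
    by_contra h
    simp only [mem_insert, mem_singleton, not_or] at h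
    exact hgen ⟨x, hx, w, hv, h.2.2, h.1, h.2.1, hvc, hvd⟩
  have hG₂w : G₂ ⊆ {c, d, w} := fun x hx => by
    by_contra h
    simp only [mem_insert, mem_singleton, not_or] at h
    exact hgen ⟨w, hw, x, hx, Ne.symm h.2.2, hwc, hwd, h.1, h.2.1⟩
  obtain ⟨-, hdF₂, -⟩ := mem_and_ne_of_subset_triple hF₂ hF₂w
  obtain ⟨hcG₂, -⟩ := mem_and_ne_of_subset_triple hG₂ hG₂w
  exact exists_closing_pair_of_subset hF₃ hG₃ hcd hwc hwd hdF₂ hw hcG₂ hv hs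

/-- The last block of rungs when `3 ∣ n`, between the rung `p` ending the greedy chain and the
rung `s` it started from. -/
theorem exists_closing_triple {F₁ G₁ F₂ G₂ F₃ G₃ : Finset ℕ} (hF₁ : #F₁ = 3) (hG₁ : #G₁ = 3)
    (hF₂ : #F₂ = 3) (hG₂ : #G₂ = 3) (hF₃ : #F₃ = 3) (hG₃ : #G₃ = 3) (p : ℕ × ℕ) {s : ℕ × ℕ}
    (hs : s.1 ∉ F₃) :
    ∃ q₁ q₂ q₃, IsRungPair F₁ G₁ q₁ ∧ IsRungPair F₂ G₂ q₂ ∧ IsRungPair F₃ G₃ q₃ ∧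
      Linked p q₁ ∧ Linked q₁ q₂ ∧ Linked q₂ q₃ ∧ Linked q₃ s ∧ NoCommonColor q₁ q₂ q₃ := by
  obtain ⟨c, hc, hcp⟩ := exists_mem_ne (by simp [hF₁] : 1 < #F₁) p.1
  obtain ⟨d, hd, hdp, hdc⟩ := exists_mem_ne_ne hG₁ p.2 c
  obtain ⟨q₂, q₃, h⟩ := exists_closing_pair hF₂ hG₂ hF₃ hG₃ hdc.symm hs
  exact ⟨(c, d), q₂, q₃, ⟨hc, hd, hdc.symm⟩, h.1, h.2.1, ⟨hcp.symm, hdp.symm⟩, h.2.2⟩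

def IsRungColoring (F G : ℕ → Finset ℕ) (P : ℕ → ℕ × ℕ) : Prop :=
  ∀ t, IsRungPair (F t) (G t) (P t) ∧ Linked (P t) (P (t + 1))

/-- `P` colours the rungs `t ∈ ℕ` of the prism, read modulo `n`, and every colour occurs on at
most `B` of the rungs `0, …, n - 1`. -/
def HasBoundedRungColoring (F G : ℕ → Finset ℕ) (n B : ℕ) : Prop :=
  ∃ P : ℕ → ℕ × ℕ, Periodic P n ∧ IsRungColoring F G P ∧
    ∀ x, Nat.count (fun t => Uses (P t) x) n ≤ B

theorem count_le_of_no_full_block (p : ℕ → Prop) [DecidablePred p] (k r : ℕ)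
    (h : ∀ j < k, ¬(p (3 * j) ∧ p (3 * j + 1) ∧ p (3 * j + 2))) :
    Nat.count p (3 * k + r) ≤ 2 * k + r := by
  rw [Nat.count_add]
  refine add_le_add ?_ (Nat.count_le _)
  induction k with
  | zero => simp
  | succ k ih =>
    have hk := h k (by omega)
    rw [show 3 * (k + 1) = 3 * k + 3 by ring, Nat.count_add]
    simp only [Nat.count_succ, Nat.count_zero]
    have := ih fun j hj => h j (by omega)
    split_ifs <;> simp_all <;> omega

theorem count_const_add_of_periodic {p : ℕ → Prop} [DecidablePred p] (hp : Periodic p n)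
    (a : ℕ) : Nat.count (fun k => p (a + k)) n = Nat.count p n := by
  have h₁ := Nat.count_add (p := p) a n
  have h₂ : Nat.count p (a + n) = Nat.count p a + Nat.count p n := by
    rw [Nat.count_add']
    simp only [hp _]
  omega

theorem hasBoundedRungColoring_of_cyclic (hn : 0 < n)
    (hF : Periodic F n) (hG : Periodic G n) (R : ℕ → ℕ × ℕ)
    (hR : ∀ s < n, IsRungPair (F s) (G s) (R s))
    (hlink : ∀ s, s + 1 < n → Linked (R s) (R (s + 1))) (hclose : Linked (R (n - 1)) (R 0))
    (hblock : ∀ j < n / 3, NoCommonColor (R (3 * j)) (R (3 * j + 1)) (R (3 * j + 2))) :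
    HasBoundedRungColoring F G n (2 * (n / 3) + n % 3) := by
  refine ⟨fun t => R (t % n), fun t => by simp, fun t => ⟨?_, ?_⟩, fun x => ?_⟩
  · rw [← hF.map_mod_nat t, ← hG.map_mod_nat t]
    exact hR _ (Nat.mod_lt _ hn)
  · dsimp only
    rw [← Nat.mod_add_mod]
    by_cases h : t % n + 1 < n
    · rw [Nat.mod_eq_of_lt h]
      exact hlink _ h
    · have h' : t % n = n - 1 := by have := Nat.mod_lt t hn; omega
      rw [h', Nat.sub_add_cancel hn, Nat.mod_self]
      exact hclose
  · have := count_le_of_no_full_block (fun t => Uses (R (t % n)) x) (n / 3) (n % 3) fun j hj => ?_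
    · rwa [Nat.div_add_mod] at this
    simp only [Nat.mod_eq_of_lt (show 3 * j + 2 < n by omega),
      Nat.mod_eq_of_lt (show 3 * j + 1 < n by omega), Nat.mod_eq_of_lt (show 3 * j < n by omega)]
    exact hblock j hj x

theorem HasBoundedRungColoring.of_shift {B : ℕ} (hF : Periodic F n) (hG : Periodic G n) {z : ℕ}
    (hz : z ≤ n) (h : HasBoundedRungColoring (fun t => F (z + t)) (fun t => G (z + t)) n B) :
    HasBoundedRungColoring F G n B := by
  obtain ⟨P, hP, hPcol, hPcount⟩ := h
  have hzt : ∀ t, z + (n - z + t) = t + n := fun t => by omega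
  refine ⟨fun t => P (n - z + t), fun t => by simp only [← add_assoc, hP _], fun t => ?_,
    fun x => ?_⟩
  · have := hPcol (n - z + t)
    dsimp only at this ⊢
    rw [← add_assoc]
    rwa [hzt, hF, hG] at this
  · exact (count_const_add_of_periodic (fun t => by simp only [hP t]) _).trans_le (hPcount x)

theorem HasBoundedRungColoring.swap {B : ℕ} (h : HasBoundedRungColoring G F n B) :
    HasBoundedRungColoring F G n B := by
  obtain ⟨P, hP, hPcol, hPcount⟩ := h
  refine ⟨fun t => (P t).swap, fun t => by simp only [hP t], fun t => ?_, fun x => ?_⟩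
  · obtain ⟨⟨hG', hF', hne⟩, h₁, h₂⟩ := hPcol t
    exact ⟨⟨hF', hG', hne.symm⟩, h₂, h₁⟩
  · convert hPcount x using 3
    simp only [Uses, Prod.fst_swap, Prod.snd_swap, or_comm]

theorem exists_fresh_chain (hF : ∀ t, #(F t) = 3) (hG : ∀ t, #(G t) = 3) {p₀ : ℕ × ℕ}
    (h₀ : IsRungPair (F 0) (G 0) p₀) :
    ∃ Q : ℕ → ℕ × ℕ, Q 0 = p₀ ∧
      ∀ t, IsRungPair (F t) (G t) (Q t) ∧ IsFreshStep (Q t) (Q (t + 1)) := by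
  have step : ∀ t (p : ℕ × ℕ), ∃ q, IsRungPair (F (t + 1)) (G (t + 1)) q ∧ IsFreshStep p q := by
    intro t p
    obtain ⟨a, ha, ha₁, ha₂⟩ := exists_mem_ne_ne (hF (t + 1)) p.1 p.2
    obtain ⟨b, hb, hb₂, hba⟩ := exists_mem_ne_ne (hG (t + 1)) p.2 a
    exact ⟨(a, b), ⟨ha, hb, hba.symm⟩, ha₁, ha₂, hb₂⟩
  choose next hnext using step
  let Q : ℕ → ℕ × ℕ := fun t => Nat.rec p₀ next t
  have hQ : ∀ t, IsRungPair (F t) (G t) (Q t) := fun t => by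
    cases t with
    | zero => exact h₀
    | succ t => exact (hnext t (Q t)).1
  exact ⟨Q, rfl, fun t => ⟨hQ t, (hnext t (Q t)).2⟩⟩

theorem hasBoundedRungColoring_of_const (hn : 2 ≤ n) (hF : Periodic F n) (hG : Periodic G n)
    (hF₀ : #(F 0) = 3) (hG₀ : #(G 0) = 3) (hconst : ∀ s < n, F s = F 0 ∧ G s = G 0) :
    HasBoundedRungColoring F G n (2 * (n / 3) + n % 3) := by
  obtain ⟨p, q, r, hp, hq, hr, hpq, hqr, hrp⟩ := exists_three_linked hF₀ hG₀
  let pat : ℕ → ℕ × ℕ := fun k => if k = 0 then p else if k = 1 then q else r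
  have hpat : ∀ k < 3, IsRungPair (F 0) (G 0) (pat k) := fun k hk => by
    interval_cases k <;> assumption
  have hpat_linked : ∀ k < 3, ∀ l < 3, k ≠ l → Linked (pat k) (pat l) := fun k hk l hl hkl => by
    interval_cases k <;> interval_cases l <;> first | omega | assumption | exact Linked.symm ‹_›
  -- for `n % 3 = 1` the last rung would repeat `p` next to rung `0`, so it gets `q` instead
  let idx : ℕ → ℕ := fun s => if s + 1 = n ∧ n % 3 = 1 then 1 else s % 3
  have hidx : ∀ s, idx s < 3 := fun s => by dsimp only [idx]; split_ifs <;> omega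
  refine hasBoundedRungColoring_of_cyclic (by omega) hF hG (fun s => pat (idx s))
    (fun s hs => (hconst s hs).1 ▸ (hconst s hs).2 ▸ hpat _ (hidx s))
    (fun s hs => hpat_linked _ (hidx s) _ (hidx _) (by dsimp only [idx]; split_ifs <;> omega))
    (hpat_linked _ (hidx _) _ (hidx _) (by dsimp only [idx]; split_ifs <;> omega))
    fun j hj => ?_
  have h₀ : idx (3 * j) = 0 := by dsimp only [idx]; split_ifs <;> omega
  have h₁ : idx (3 * j + 1) = 1 := by dsimp only [idx]; split_ifs <;> omega
  have h₂ : idx (3 * j + 2) = 2 := by dsimp only [idx]; split_ifs <;> omega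
  simp only [h₀, h₁, h₂]
  exact noCommonColor_of_linked hpq hqr hrp

theorem hasBoundedRungColoring_of_not_dvd (hn : 2 ≤ n) (h3 : n % 3 ≠ 0) (hF : Periodic F n)
    (hG : Periodic G n) (hF₃ : ∀ t, #(F t) = 3) (hG₃ : ∀ t, #(G t) = 3) {a : ℕ} (ha : a ∈ F 0)
    (ha' : a ∉ F (n - 1)) : HasBoundedRungColoring F G n (2 * (n / 3) + n % 3) := by
  obtain ⟨b, hb, hba⟩ := exists_mem_ne (by simp [hG₃] : 1 < #(G 0)) a
  obtain ⟨Q, hQ₀, hQ⟩ := exists_fresh_chain hF₃ hG₃ (p₀ := (a, b)) ⟨ha, hb, hba.symm⟩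
  obtain ⟨β, hβ, hβQ, hβb⟩ := exists_mem_ne_ne (hG₃ (n - 1)) (Q (n - 2)).2 b
  obtain ⟨α, hα, hαQ, hαβ⟩ := exists_mem_ne_ne (hF₃ (n - 1)) (Q (n - 2)).1 β
  let R : ℕ → ℕ × ℕ := fun s => if s = n - 1 then (α, β) else Q s
  have hRQ : ∀ s, s + 1 < n → R s = Q s := fun s hs => if_neg (by omega)
  have hRlast : R (n - 1) = (α, β) := if_pos rfl
  refine hasBoundedRungColoring_of_cyclic (by omega) hF hG R (fun s hs => ?_) (fun s hs => ?_)
    ?_ fun j hj => ?_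
  · rcases (by omega : s + 1 < n ∨ s = n - 1) with h | rfl
    · exact hRQ s h ▸ (hQ s).1
    · exact hRlast ▸ ⟨hα, hβ, hαβ⟩
  · rw [hRQ s hs]
    rcases (by omega : s + 2 < n ∨ s = n - 2) with h | rfl
    · exact hRQ (s + 1) h ▸ (hQ s).2.linked
    · rw [show n - 2 + 1 = n - 1 by omega, hRlast]
      exact ⟨hαQ.symm, hβQ.symm⟩
  · rw [hRlast, hRQ 0 (by omega), hQ₀]
    exact ⟨fun h : α = a => ha' (h ▸ hα), hβb⟩
  · rw [hRQ _ (by omega), hRQ _ (by omega), hRQ _ (by omega)]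
    exact noCommonColor_of_isFreshStep (hQ _).2 (hQ _).2

theorem hasBoundedRungColoring_of_dvd (hn : 6 ≤ n) (h3 : n % 3 = 0) (hF : Periodic F n)
    (hG : Periodic G n) (hF₃ : ∀ t, #(F t) = 3) (hG₃ : ∀ t, #(G t) = 3) {a : ℕ} (ha : a ∈ F 0)
    (ha' : a ∉ F (n - 1)) : HasBoundedRungColoring F G n (2 * (n / 3) + n % 3) := by
  obtain ⟨b, hb, hba⟩ := exists_mem_ne (by simp [hG₃] : 1 < #(G 0)) a
  obtain ⟨Q, hQ₀, hQ⟩ := exists_fresh_chain hF₃ hG₃ (p₀ := (a, b)) ⟨ha, hb, hba.symm⟩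
  obtain ⟨q₁, q₂, q₃, hq₁, hq₂, hq₃, hQq₁, hq₁₂, hq₂₃, hq₃Q, hq⟩ :=
    exists_closing_triple (hF₃ (n - 3)) (hG₃ (n - 3)) (hF₃ (n - 2)) (hG₃ (n - 2)) (hF₃ (n - 1))
      (hG₃ (n - 1)) (Q (n - 4)) (s := (a, b)) ha'
  let R : ℕ → ℕ × ℕ := fun s =>
    if s = n - 3 then q₁ else if s = n - 2 then q₂ else if s = n - 1 then q₃ else Q s
  have hRQ : ∀ s, s + 3 < n → R s = Q s := fun s hs => by
    simp only [R]; split_ifs <;> first | rfl | omega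
  have hR₁ : R (n - 3) = q₁ := if_pos rfl
  have hR₂ : R (n - 2) = q₂ := by simp only [R]; split_ifs <;> first | rfl | omega
  have hR₃ : R (n - 1) = q₃ := by simp only [R]; split_ifs <;> first | rfl | omega
  refine hasBoundedRungColoring_of_cyclic (by omega) hF hG R (fun s hs => ?_) (fun s hs => ?_)
    ?_ fun j hj => ?_
  · rcases (by omega : s + 3 < n ∨ s = n - 3 ∨ s = n - 2 ∨ s = n - 1) with h | rfl | rfl | rfl
    · exact hRQ s h ▸ (hQ s).1
    · exact hR₁ ▸ hq₁
    · exact hR₂ ▸ hq₂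
    · exact hR₃ ▸ hq₃
  · rcases (by omega : s + 4 < n ∨ s = n - 4 ∨ s = n - 3 ∨ s = n - 2) with h | rfl | rfl | rfl
    · rw [hRQ s (by omega), hRQ (s + 1) h]
      exact (hQ s).2.linked
    · rw [hRQ _ (by omega), show n - 4 + 1 = n - 3 by omega, hR₁]
      exact hQq₁
    · rw [show n - 3 + 1 = n - 2 by omega, hR₁, hR₂]
      exact hq₁₂
    · rw [show n - 2 + 1 = n - 1 by omega, hR₂, hR₃]
      exact hq₂₃
  · rw [hR₃, hRQ 0 (by omega), hQ₀]
    exact hq₃Q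
  · rcases (by omega : 3 * j + 5 < n ∨ 3 * j = n - 3) with h | h
    · rw [hRQ _ (by omega), hRQ _ (by omega), hRQ _ (by omega)]
      exact noCommonColor_of_isFreshStep (hQ _).2 (hQ _).2
    · rw [h, show n - 3 + 1 = n - 2 by omega, show n - 3 + 2 = n - 1 by omega, hR₁, hR₂, hR₃]
      exact hq

theorem hasBoundedRungColoring_of_ne (hn : 6 ≤ n) (hF : Periodic F n) (hG : Periodic G n)
    (hF₃ : ∀ t, #(F t) = 3) (hG₃ : ∀ t, #(G t) = 3) (hne : F 0 ≠ F (n - 1)) :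
    HasBoundedRungColoring F G n (2 * (n / 3) + n % 3) := by
  obtain ⟨a, ha, ha'⟩ := not_subset.mp fun h => hne (eq_of_subset_of_card_le h (by rw [hF₃, hF₃]))
  rcases eq_or_ne (n % 3) 0 with h3 | h3
  · exact hasBoundedRungColoring_of_dvd hn h3 hF hG hF₃ hG₃ ha ha'
  · exact hasBoundedRungColoring_of_not_dvd (by omega) h3 hF hG hF₃ hG₃ ha ha'

theorem hasBoundedRungColoring (hn : 6 ≤ n) (hF : Periodic F n) (hG : Periodic G n)
    (hF₃ : ∀ t, #(F t) = 3) (hG₃ : ∀ t, #(G t) = 3) :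
    HasBoundedRungColoring F G n (2 * (n / 3) + n % 3) := by
  by_cases hstep : ∃ t, t + 1 < n ∧ (F (t + 1) ≠ F t ∨ G (t + 1) ≠ G t)
  · obtain ⟨t, ht, hFG⟩ := hstep
    -- rotate rung `t + 1` to position `0`, so that rung `t` lands at `n - 1`
    have hrot : ∀ {H : ℕ → Finset ℕ}, Periodic H n → H (t + 1) ≠ H t →
        H (t + 1 + 0) ≠ H (t + 1 + (n - 1)) := fun hH h => by
      rwa [add_zero, show t + 1 + (n - 1) = t + n by omega, hH]
    rcases hFG with hF' | hG'
    · exact .of_shift hF hG (z := t + 1) (by omega) <| hasBoundedRungColoring_of_ne hn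
        (hF.const_add _) (hG.const_add _) (fun _ => hF₃ _) (fun _ => hG₃ _) (hrot hF hF')
    · exact .swap <| .of_shift hG hF (z := t + 1) (by omega) <| hasBoundedRungColoring_of_ne hn
        (hG.const_add _) (hF.const_add _) (fun _ => hG₃ _) (fun _ => hF₃ _) (hrot hG hG')
  · push Not at hstep
    refine hasBoundedRungColoring_of_const (by omega) hF hG (hF₃ 0) (hG₃ 0) fun s hs => ?_
    induction s with
    | zero => exact ⟨rfl, rfl⟩
    | succ s ih =>
      obtain ⟨hF', hG'⟩ := hstep s hs
      exact ⟨hF'.trans (ih (by omega)).1, hG'.trans (ih (by omega)).2⟩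

def ofRungs (P : ℕ → ℕ × ℕ) (v : Fin n × Fin 2) : ℕ :=
  if v.2 = 0 then (P v.1).1 else (P v.1).2

theorem ofRungs_ne_of_ne {P : ℕ → ℕ × ℕ} (hP : ∀ t, (P t).1 ≠ (P t).2) (i : Fin n)
    {j j' : Fin 2} (hj : j ≠ j') : ofRungs P (i, j) ≠ ofRungs P (i, j') := by
  have := hP i
  fin_cases j <;> fin_cases j' <;> simp [ofRungs] at hj ⊢ <;> omega

theorem isProperListColoring_ofRungs [NeZero n] {L : Fin n × Fin 2 → Finset ℕ}
    {P : ℕ → ℕ × ℕ} (hP : Periodic P n)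
    (hPcol : IsRungColoring (fun t => L (Fin.ofNat n t, 0)) (fun t => L (Fin.ofNat n t, 1)) P) :
    IsProperListColoring L (ofRungs P) := by
  have hrung : ∀ i : Fin n, IsRungPair (L (i, 0)) (L (i, 1)) (P i) := fun i => by
    simpa using (hPcol i).1
  have hadj : ∀ v w : Fin n × Fin 2,
      (v.1 = w.1 ∧ v.2 ≠ w.2) ∨ (v.2 = w.2 ∧ w.1.val = (v.1.val + 1) % n) →
      ofRungs P v ≠ ofRungs P w := by
    rintro ⟨i, j⟩ ⟨i', j'⟩ h
    dsimp only at h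
    rcases h with ⟨rfl, hj⟩ | ⟨rfl, hi⟩
    · exact ofRungs_ne_of_ne (fun t => (hPcol t).1.2.2) i hj
    · have hlink := (hPcol i).2
      rw [← hP.map_mod_nat (i + 1), ← hi] at hlink
      fin_cases j <;> simp [ofRungs, hlink.1, hlink.2]
  refine ⟨fun ⟨i, j⟩ => ?_, fun v w hvw => ?_⟩
  · fin_cases j <;> simp [ofRungs, (hrung i).1, (hrung i).2.1]
  · rw [prism, SimpleGraph.fromRel_adj] at hvw
    rcases hvw.2 with h | h
    · exact hadj v w h
    · exact (hadj w v h).symm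

theorem card_colorClass_ofRungs_le {P : ℕ → ℕ × ℕ} (hP : ∀ t, (P t).1 ≠ (P t).2) (k : ℕ) :
    #(colorClass (ofRungs P : Fin n × Fin 2 → ℕ) k) ≤ Nat.count (fun t => Uses (P t) k) n := by
  rw [Nat.count_eq_card_filter_range]
  refine card_le_card_of_injOn (fun v => v.1.val) (fun ⟨i, j⟩ hv => ?_) ?_
  · simp only [colorClass, coe_filter, mem_univ, true_and, Set.mem_ofPred_eq] at hv
    simp only [coe_filter, mem_range, Set.mem_ofPred_eq]
    refine ⟨i.isLt, ?_⟩
    fin_cases j <;> simp_all [ofRungs, Uses]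
  · rintro ⟨i, j⟩ hv ⟨i', j'⟩ hv' hii
    simp only [colorClass, coe_filter, mem_univ, true_and, Set.mem_ofPred_eq] at hv hv'
    obtain rfl : i = i' := Fin.ext hii
    by_contra hjj
    exact ofRungs_ne_of_ne hP i (fun h => hjj (by rw [h])) (hv.trans hv'.symm)

theorem exists_bounded_listColoring (hn : 6 ≤ n) (L : Fin n × Fin 2 → Finset ℕ)
    (hL : ∀ v, #(L v) = 3) :
    ∃ c, IsProperListColoring L c ∧ ∀ k, #(colorClass c k) ≤ 2 * n ⌈/⌉ 3 := by
  have : NeZero n := ⟨by omega⟩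
  have hceil : 2 * (n / 3) + n % 3 = 2 * n ⌈/⌉ 3 := by
    rw [Nat.ceilDiv_eq_add_pred_div]; omega
  have hper : ∀ j, Periodic (fun t => L (Fin.ofNat n t, j)) n := fun j t => by
    dsimp only
    rw [show Fin.ofNat n (t + n) = Fin.ofNat n t by
      ext; simp only [Fin.val_ofNat, Nat.add_mod_right]]
  obtain ⟨P, hP, hPcol, hPcount⟩ :=
    hasBoundedRungColoring hn (hper 0) (hper 1) (fun _ => hL _) (fun _ => hL _)
  refine ⟨ofRungs P, isProperListColoring_ofRungs hP hPcol, fun k => ?_⟩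
  rw [← hceil]
  exact (card_colorClass_ofRungs_le (fun t => (hPcol t).1.2.2) k).trans (hPcount k)

theorem exists_colorWord_eq_cons [NeZero n] (c : Fin n × Fin 2 → ℕ) :
    ∃ m w, colorWord c = m :: w ∧ (∀ k, #(colorClass c k) ≤ m) ∧ ∃ k, #(colorClass c k) = m := by
  have hmem : ∀ x, x ∈ colorWord c ↔ ∃ k ∈ univ.image c, #(colorClass c k) = x := fun x => by
    simp [colorWord]
  have hsorted : (colorWord c).Pairwise (· ≥ ·) := by
    simp [colorWord, List.pairwise_reverse]
  have hclass : ∀ k, #(colorClass c k) = 0 ∨ #(colorClass c k) ∈ colorWord c := fun k => by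
    by_cases hk : k ∈ univ.image c
    · exact .inr ((hmem _).2 ⟨k, hk, rfl⟩)
    · left
      simp only [colorClass, card_eq_zero, filter_eq_empty_iff]
      exact fun v _ hv => hk (mem_image.2 ⟨v, mem_univ v, hv⟩)
  obtain ⟨m, w, hw⟩ : ∃ m w, colorWord c = m :: w := by
    have h := (hmem _).2 ⟨c 0, mem_image_of_mem c (mem_univ 0), rfl⟩
    exact List.exists_cons_of_ne_nil (List.ne_nil_of_mem h)
  rw [hw, List.pairwise_cons] at hsorted
  refine ⟨m, w, hw, fun k => ?_, ?_⟩
  · rcases hclass k with h | h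
    · omega
    · rw [hw, List.mem_cons] at h
      rcases h with h | h
      · exact h.le
      · exact hsorted.1 _ h
  · obtain ⟨k, -, hk⟩ := (hmem m).1 (hw ▸ List.mem_cons_self)
    exact ⟨k, hk⟩

end Prism

/-- If `n ≥ 6`, `L` is a 3-uniform list assignment of `Π_n` and `c` is a lex-min
proper `L`-coloring of `Π_n`, then every color class of `c` has at most `⌈2n/3⌉`
vertices. -/
theorem lexmin_is_bounded (n : ℕ) (hn : 6 ≤ n)
    (L : Fin n × Fin 2 → Finset ℕ) (hL : ∀ v, (L v).card = 3)
    (c : Fin n × Fin 2 → ℕ) (hc : IsLexMin L c) :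
    ∀ k : ℕ, (colorClass c k).card ≤ 2 * n ⌈/⌉ 3 := by
  intro k
  have : NeZero n := ⟨by omega⟩
  obtain ⟨c', hc', hc'_le⟩ := Prism.exists_bounded_listColoring hn L hL
  obtain ⟨m, w, hw, hm, -⟩ := Prism.exists_colorWord_eq_cons c
  obtain ⟨m', w', hw', -, k', hk'⟩ := Prism.exists_colorWord_eq_cons c'
  have hmm' : m ≤ m' := not_lt.1 fun h => hc.2 c' hc' (hw ▸ hw' ▸ List.Lex.rel h)
  calc (colorClass c k).card ≤ m := hm k
    _ ≤ m' := hmm'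
    _ = (colorClass c' k').card := hk'.symm
    _ ≤ 2 * n ⌈/⌉ 3 := hc'_le k'
end
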